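/- arXiv:q-alg/9608009 — 6 statements merged into one kernel-verified Lean document; each statement's English description precedes it below -/
import Mathlib

section
/- Let G be a compact Lie group and let (K_n)_{n∈ℕ} be a decreasing sequence of closed subgroups of G (i.e., K_{n+1} ⊆ K_n for all n) whose intersection ⋂_{n∈ℕ} K_n is the trivial subgroup {1}. Then there exists N ∈ ℕ such that K_n = {1} for all n ≥ N. -/
open Set Metric Filter

/-- A Lie group has no small subgroups: there is a neighbourhood of the identity
containing no nontrivial subgroup. -/
lemma nss {E : Type*} [NormedAddCommGroup E] [NormedSpace ℝ E]
    {G : Type*} [TopologicalSpace G] [ChartedSpace E G] [Group G] [IsTopologicalGroup G]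
    [LieGroup (modelWithCornersSelf ℝ E) (⊤ : ℕ∞) G] :
    ∃ V : Set G, IsOpen V ∧ (1:G) ∈ V ∧ ∀ H : Subgroup G, (H:Set G) ⊆ V → H = ⊥ := by
  classical
  set ψ := extChartAt (modelWithCornersSelf ℝ E) (1:G) with hψ
  set a : E := ψ 1 with ha
  set F : E × E → E := fun p => ψ (ψ.symm p.1 * ψ.symm p.2) with hFdef
  -- F is C¹ at (a,a)
  have hF : ContDiffAt ℝ 1 F (a, a) := by
    have h := (contMDiff_mul (I := modelWithCornersSelf ℝ E) (n := ((⊤ : ℕ∞) : WithTop ℕ∞)) (G := G)).contMDiffAt (x := ((1:G),1))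
    rw [contMDiffAt_iff] at h
    have h2 := h.2
    rw [extChartAt_prod] at h2
    simp only [mul_one, ModelWithCorners.range_eq_univ, contDiffWithinAt_univ] at h2
    exact h2.of_le (by exact_mod_cast le_top : (1:ℕ∞) ≤ ((⊤:ℕ∞) : WithTop ℕ∞))
  have hFdiff : DifferentiableAt ℝ F (a, a) := hF.differentiableAt (by simp)
  have htarget : ψ.target ∈ nhds a := extChartAt_target_mem_nhds (1:G)
  have hsymm_a : ψ.symm a = 1 := extChartAt_to_inv (1:G)
  have hFaa : F (a, a) = a := by simp [hFdef, hsymm_a]; exact ha.symm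
  -- partial derivatives
  set D := fderiv ℝ F (a, a) with hD
  have hDf : HasFDerivAt F D (a, a) := hFdiff.hasFDerivAt
  have hleft : ∀ᶠ x in nhds a, F (x, a) = x := by
    filter_upwards [htarget] with x hx
    simp only [hFdef, hsymm_a, mul_one]
    exact ψ.right_inv hx
  have hright : ∀ᶠ y in nhds a, F (a, y) = y := by
    filter_upwards [htarget] with y hy
    simp only [hFdef, hsymm_a, one_mul]
    exact ψ.right_inv hy
  have hDl : ∀ u : E, D (u, 0) = u := by
    have h1 : HasFDerivAt (F ∘ (fun x : E => (x, a)))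
        (D.comp (ContinuousLinearMap.inl ℝ E E)) a :=
      hDf.comp (f := fun x : E => (x, a)) a (hasFDerivAt_prodMk_left a a)
    have hl' : (fun x : E => x) =ᶠ[nhds a] (F ∘ (fun x : E => (x, a))) :=
      hleft.mono fun x hx => hx.symm
    have h2 : HasFDerivAt (fun x : E => x)
        (D.comp (ContinuousLinearMap.inl ℝ E E)) a :=
      h1.congr_of_eventuallyEq hl'
    have := h2.unique (hasFDerivAt_id a)
    intro u
    have := congrArg (fun (L : E →L[ℝ] E) => L u) this
    simpa using this
  have hDr : ∀ v : E, D (0, v) = v := by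
    have h1 : HasFDerivAt (F ∘ (fun y : E => (a, y)))
        (D.comp (ContinuousLinearMap.inr ℝ E E)) a :=
      hDf.comp (f := fun y : E => (a, y)) a (hasFDerivAt_prodMk_right a a)
    have hr' : (fun y : E => y) =ᶠ[nhds a] (F ∘ (fun y : E => (a, y))) :=
      hright.mono fun y hy => hy.symm
    have h2 : HasFDerivAt (fun y : E => y)
        (D.comp (ContinuousLinearMap.inr ℝ E E)) a :=
      h1.congr_of_eventuallyEq hr'
    have := h2.unique (hasFDerivAt_id a)
    intro v
    have := congrArg (fun (L : E →L[ℝ] E) => L v) this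
    simpa using this
  have hDuv : ∀ u v : E, D (u, v) = u + v := by
    intro u v
    have : (u, v) = (u, (0:E)) + ((0:E), v) := by simp
    rw [this, map_add, hDl, hDr]
  -- little-o along the diagonal
  have hlo := hDf.isLittleO
  have hdiag : Tendsto (fun x : E => (x, x)) (nhds a) (nhds (a, a)) :=
    (continuous_id.prodMk continuous_id).continuousAt
  have hlo2 := hlo.comp_tendsto hdiag
  have hbound : ∀ᶠ x in nhds a, (3/2 : ℝ) * ‖x - a‖ ≤ ‖F (x, x) - a‖ := by
    have hev := hlo2.def (by norm_num : (0:ℝ) < 1/2)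
    filter_upwards [hev] with x hx
    simp only [Function.comp] at hx
    have hnorm : ‖((x, x) : E × E) - (a, a)‖ = ‖x - a‖ := by
      simp [Prod.norm_def, Prod.sub_def]
    rw [hFaa, hnorm] at hx
    have hDx : D ((x, x) - (a, a)) = (x - a) + (x - a) := by
      rw [Prod.sub_def]; exact hDuv _ _
    rw [hDx] at hx
    have h2 : ‖(x - a) + (x - a)‖ = 2 * ‖x - a‖ := by
      rw [← two_smul ℝ (x - a)]
      simp [norm_smul]
    have := norm_sub_norm_le (F (x, x) - a) ((x - a) + (x - a))
    have h3 : ‖F (x, x) - a - ((x - a) + (x - a))‖ ≤ 1/2 * ‖x - a‖ := hx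
    nlinarith [norm_nonneg (x - a), norm_nonneg (F (x,x) - a),
      abs_norm_sub_norm_le (F (x, x) - a) ((x - a) + (x - a)),
      abs_le.1 (abs_norm_sub_norm_le (F (x, x) - a) ((x - a) + (x - a)))]
  -- choose a ball
  obtain ⟨r, hr0, hrball⟩ : ∃ r > 0, ∀ x ∈ ball a r,
      x ∈ ψ.target ∧ (3/2 : ℝ) * ‖x - a‖ ≤ ‖F (x, x) - a‖ := by
    have hev2 : (∀ᶠ x in nhds a, x ∈ ψ.target ∧ (3/2 : ℝ) * ‖x - a‖ ≤ ‖F (x, x) - a‖) := by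
      filter_upwards [htarget, hbound] with x h1 h2
      exact ⟨h1, h2⟩
    obtain ⟨r, hr0, hr⟩ := Metric.eventually_nhds_iff_ball.1 hev2
    exact ⟨r, hr0, hr⟩
  -- the small neighbourhood
  set V₀ : Set G := ψ.source ∩ ψ ⁻¹' (ball a (r/2)) with hV₀def
  have hV₀ : V₀ ∈ nhds (1:G) := by
    apply Filter.inter_mem (extChartAt_source_mem_nhds (1:G))
    exact (continuousAt_extChartAt (1:G)).preimage_mem_nhds (ball_mem_nhds a (by linarith))
  refine ⟨interior V₀, isOpen_interior, mem_interior_iff_mem_nhds.2 hV₀, ?_⟩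
  intro H hH
  rw [eq_bot_iff]
  intro h hh
  rw [Subgroup.mem_bot]
  by_contra hne
  have key : ∀ k : ℕ, h ^ (2^k) ∈ V₀ :=
    fun k => interior_subset (hH (pow_mem hh (2^k)))
  have hsrc : ∀ k : ℕ, h ^ (2^k) ∈ ψ.source := fun k => (key k).1
  have hball : ∀ k : ℕ, ‖ψ (h ^ (2^k)) - a‖ < r/2 := by
    intro k
    have := (key k).2
    rw [mem_preimage, mem_ball, dist_eq_norm] at this
    exact this
  have hh1 : h ∈ ψ.source := by simpa using hsrc 0
  have hc : 0 < ‖ψ h - a‖ := by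
    rw [norm_pos_iff, sub_ne_zero]
    intro heq
    exact hne (ψ.injOn hh1 (mem_extChartAt_source (1:G)) heq)
  have hgrow : ∀ k : ℕ, (3/2:ℝ)^k * ‖ψ h - a‖ ≤ ‖ψ (h ^ (2^k)) - a‖ := by
    intro k
    induction k with
    | zero => simp
    | succ k ih =>
      set g := h ^ (2^k) with hg
      have hgball : ψ g ∈ ball a r := by
        rw [mem_ball, dist_eq_norm]
        calc ‖ψ g - a‖ < r/2 := hball k
        _ < r := by linarith
      obtain ⟨_, hineq⟩ := hrball (ψ g) hgball
      have hFg : F (ψ g, ψ g) = ψ (g * g) := by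
        have hgs : g ∈ ψ.source := hsrc k
        simp only [hFdef, ψ.left_inv hgs]
      have hgg : h ^ (2^(k+1)) = g * g := by
        rw [hg, ← pow_add]
        congr 1
        ring
      rw [hgg, ← hFg]
      calc (3/2:ℝ)^(k+1) * ‖ψ h - a‖ = (3/2) * ((3/2:ℝ)^k * ‖ψ h - a‖) := by ring
      _ ≤ (3/2) * ‖ψ g - a‖ := by nlinarith
      _ ≤ ‖F (ψ g, ψ g) - a‖ := hineq
  obtain ⟨k, hk⟩ := pow_unbounded_of_one_lt ((r/2) / ‖ψ h - a‖) (by norm_num : (1:ℝ) < 3/2)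
  have : r/2 < (3/2:ℝ)^k * ‖ψ h - a‖ := by
    rw [div_lt_iff₀ hc] at hk
    linarith
  have := lt_of_lt_of_le this (hgrow k)
  exact absurd (hball k) (not_lt.2 this.le)


/-- Let `G` be a compact Lie group (a finite-dimensional smooth real Lie
group whose underlying space is compact, modelled on the finite-dimensional real vector
space `E`), and let `(K n)` be a decreasing sequence of closed subgroups of `G` whose
intersection is the trivial subgroup.  Then there is an `N` such that `K n` is trivial
for all `n ≥ N`. -/
theorem descending_chain_of_closed_subgroups_of_compact_lie_group
    {E : Type*} [NormedAddCommGroup E] [NormedSpace ℝ E] [FiniteDimensional ℝ E]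
    {G : Type*} [TopologicalSpace G] [ChartedSpace E G] [Group G] [IsTopologicalGroup G]
    [LieGroup (modelWithCornersSelf ℝ E) (⊤ : ℕ∞) G] [CompactSpace G]
    (K : ℕ → Subgroup G)
    (hclosed : ∀ n, IsClosed (K n : Set G))
    (hdec : Antitone K)
    (hinter : (⨅ n, K n) = ⊥) :
    ∃ N : ℕ, ∀ n ≥ N, K n = ⊥ := by
  obtain ⟨V, hVopen, hV1, hVsub⟩ := nss (E := E) (G := G)
  have hset : (⋂ n, (K n : Set G)) = {1} := by
    rw [← Subgroup.coe_iInf, hinter, Subgroup.coe_bot]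
  have hempty : (univ : Set G) ∩ ⋂ n, ((K n : Set G) ∩ Vᶜ) = ∅ := by
    rw [univ_inter, ← iInter_inter, hset]
    ext g
    simp only [mem_inter_iff, mem_singleton_iff, mem_compl_iff, mem_empty_iff_false,
      iff_false, not_and]
    rintro rfl
    exact fun hg => hg hV1
  obtain ⟨t, ht⟩ := isCompact_univ.elim_finite_subfamily_closed _
    (fun n => (hclosed n).inter hVopen.isClosed_compl) hempty
  refine ⟨t.sup id, fun n hn => ?_⟩
  apply hVsub
  intro g hg
  by_contra hgV
  have hmem : g ∈ (univ : Set G) ∩ ⋂ m ∈ t, ((K m : Set G) ∩ Vᶜ) := by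
    refine ⟨trivial, ?_⟩
    simp only [mem_iInter]
    intro m hm
    have hmn : m ≤ n := le_trans (Finset.le_sup (f := id) hm) hn
    exact ⟨hdec hmn hg, hgV⟩
  rw [ht] at hmem
  exact hmem
end

section
/- Let G be a compact Lie group acting faithfully and linearly on a complex vector space V: that is, ρ : G → GL(V) is an injective group homomorphism. Suppose (U_n)_{n∈ℕ} is an increasing sequence of finite-dimensional subspaces of V with ⋃_n U_n = V, such that each U_n is G-invariant (ρ(g)U_n ⊆ U_n for all g ∈ G) and the induced map G → GL(U_n), g ↦ ρ(g)|_{U_n}, is continuous. Then there exists N ∈ ℕ such that for every n ≥ N the action of G on U_n is faithful, i.e., if ρ(g) restricts to the identity on U_n then g = 1. -/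
open Set Filter Metric

/-- A Lie group has no small subgroups: there is a neighborhood `W` of `1` such that
any element all of whose powers lie in `W` is trivial. -/
lemma lie_group_no_small_subgroups
    {E : Type*} [NormedAddCommGroup E] [NormedSpace ℝ E] [FiniteDimensional ℝ E]
    {G : Type*} [TopologicalSpace G] [ChartedSpace E G] [Group G] [IsTopologicalGroup G]
    [LieGroup (modelWithCornersSelf ℝ E) (⊤ : ℕ∞) G] :
    ∃ W : Set G, IsOpen W ∧ (1 : G) ∈ W ∧ ∀ g : G, (∀ k : ℕ, g ^ k ∈ W) → g = 1 := by
  set I := modelWithCornersSelf ℝ E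
  set e := extChartAt I (1 : G) with he
  set o : E := e 1 with ho
  -- the multiplication read in the chart
  set F : E × E → E := fun p => e (e.symm p.1 * e.symm p.2) with hF
  set f : E × E → E := fun p => F (p.1 + o, p.2 + o) - o with hf
  have hFd : ContDiffAt ℝ 1 F (o, o) := by
    have h := (contMDiff_mul I (n := ((⊤ : ℕ∞) : WithTop ℕ∞)) (G := G)).contMDiffAt (x := ((1 : G), (1 : G)))
    rw [contMDiffAt_iff] at h
    obtain ⟨-, h⟩ := h
    have hrange : range (I.prod I) = univ := by
      simp [I]
    rw [hrange, contDiffWithinAt_univ] at h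
    have hfun : (extChartAt I (((1:G),(1:G)).1 * ((1:G),(1:G)).2)) ∘ (fun p : G × G => p.1 * p.2) ∘
        (extChartAt (I.prod I) ((1:G),(1:G))).symm = F := by
      funext p
      simp only [mul_one]
      rfl
    have hpt : (extChartAt (I.prod I) ((1 : G), (1 : G))) ((1:G),(1:G)) = (o, o) := by
      simp [I, extChartAt_prod, ho, he]
    rw [hfun, hpt] at h
    exact h.of_le (by exact_mod_cast (le_top : (1:ℕ∞) ≤ ⊤))
  have hfd : ContDiffAt ℝ 1 f (0, 0) := by
    have h1 : ContDiffAt ℝ 1 (fun p : E × E => (p.1 + o, p.2 + o)) (0, 0) :=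
      ((contDiff_fst.add contDiff_const).prodMk (contDiff_snd.add contDiff_const)).contDiffAt
    have h2 : ContDiffAt ℝ 1 (F ∘ fun p : E × E => (p.1 + o, p.2 + o)) (0, 0) :=
      ContDiffAt.comp _ (by simpa using hFd) h1
    exact h2.sub contDiffAt_const
  -- strict differentiability at the origin
  have hL : HasStrictFDerivAt f (fderiv ℝ f (0, 0)) (0, 0) := hfd.hasStrictFDerivAt one_ne_zero
  set L := fderiv ℝ f (0, 0) with hLdef
  -- eventually `y + o` lies in the target of the chart
  have htgt : ∀ᶠ y : E in nhds 0, y + o ∈ e.target := by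
    have h1 : e.target ∈ nhds o := extChartAt_target_mem_nhds (1 : G)
    have h2 : Filter.Tendsto (fun y : E => y + o) (nhds 0) (nhds ((0 : E) + o)) :=
      (continuous_id.add continuous_const).continuousAt
    rw [zero_add] at h2
    exact h2 h1
  -- the chart identities
  have hsymm_o : e.symm ((0 : E) + o) = 1 := by rw [zero_add, ho]; exact extChartAt_to_inv (1 : G)
  have hid1 : ∀ y : E, y + o ∈ e.target → f (y, 0) = y := by
    intro y hy
    show F (y + o, (0 : E) + o) - o = y
    show e (e.symm (y + o) * e.symm ((0 : E) + o)) - o = y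
    rw [hsymm_o, mul_one, e.right_inv hy, add_sub_cancel_right]
  have hid2 : ∀ y : E, y + o ∈ e.target → f (0, y) = y := by
    intro y hy
    show e (e.symm ((0 : E) + o) * e.symm (y + o)) - o = y
    rw [hsymm_o, one_mul, e.right_inv hy, add_sub_cancel_right]
  -- the derivative acts as the identity in the second slot
  have hLy : ∀ y : E, L (0, y) = y := by
    have hg : (fun y : E => f (0, y)) =ᶠ[nhds 0] id := htgt.mono fun y hy => hid2 y hy
    have hd1 : HasFDerivAt (fun y : E => f (0, y))
        (L.comp (ContinuousLinearMap.inr ℝ E E)) 0 := by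
      have h0 : ((ContinuousLinearMap.inr ℝ E E) : E → E × E) (0 : E) = ((0 : E), (0 : E)) := by
        simp
      have := (h0 ▸ hL.hasFDerivAt).comp (0 : E)
        ((ContinuousLinearMap.inr ℝ E E).hasFDerivAt (x := (0 : E)))
      exact this
    have hd2 : HasFDerivAt (fun y : E => f (0, y)) (ContinuousLinearMap.id ℝ E) 0 :=
      hg.hasFDerivAt_iff.mpr (hasFDerivAt_id 0)
    intro y
    have := hd1.unique hd2
    calc L (0, y) = (L.comp (ContinuousLinearMap.inr ℝ E E)) y := rfl
      _ = y := by rw [this]; rfl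
  -- quantitative estimate
  have hest := hL.isLittleO.def (by norm_num : (0:ℝ) < 1/2)
  rw [Metric.eventually_nhds_iff] at hest
  obtain ⟨δ₁, hδ₁, hball⟩ := hest
  rw [Metric.eventually_nhds_iff] at htgt
  obtain ⟨δ₂, hδ₂, htgt'⟩ := htgt
  set δ := min δ₁ δ₂ with hδdef
  have hδ : 0 < δ := lt_min hδ₁ hδ₂
  have hEst : ∀ a b : E × E, ‖a‖ < δ → ‖b‖ < δ →
      ‖f a - f b - L (a - b)‖ ≤ 1/2 * ‖a - b‖ := by
    intro a b ha hb
    have ha' : max ‖a.1‖ ‖a.2‖ < δ₁ := by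
      rw [← Prod.norm_def]; exact ha.trans_le (min_le_left _ _)
    have hb' : max ‖b.1‖ ‖b.2‖ < δ₁ := by
      rw [← Prod.norm_def]; exact hb.trans_le (min_le_left _ _)
    refine @hball (a, b) ?_
    simp only [Prod.dist_eq, dist_zero_right]
    exact max_lt ha' hb'
  have hTgt : ∀ y : E, ‖y‖ < δ → y + o ∈ e.target := by
    intro y hy
    refine htgt' ?_
    rw [dist_eq_norm, sub_zero]
    exact lt_of_lt_of_le hy (min_le_right _ _)
  -- the neighborhood
  refine ⟨e.source ∩ e ⁻¹' Metric.ball o δ, ?_, ?_, ?_⟩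
  · exact (continuousOn_extChartAt (1 : G)).isOpen_inter_preimage
      (isOpen_extChartAt_source (1 : G)) Metric.isOpen_ball
  · exact ⟨mem_extChartAt_source (1 : G), by simp [ho, hδ]⟩
  · intro g hg
    by_contra hne
    have hsrc : ∀ k : ℕ, g ^ k ∈ e.source := fun k => (hg k).1
    have hdist : ∀ k : ℕ, ‖e (g ^ k) - o‖ < δ := by
      intro k
      have := (hg k).2
      rwa [Set.mem_preimage, Metric.mem_ball, dist_eq_norm] at this
    have hgsrc : g ∈ e.source := by have := hsrc 1; rwa [pow_one] at this
    set x := e g - o with hx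
    have hxδ : ‖x‖ < δ := by have := hdist 1; rwa [pow_one] at this
    have hx0 : x ≠ 0 := by
      rw [hx, sub_ne_zero, ho]
      intro hcon
      exact hne (e.injOn hgsrc (mem_extChartAt_source (1 : G)) hcon)
    have hxpos : 0 < ‖x‖ := norm_pos_iff.mpr hx0
    -- recursion
    have key : ∀ k : ℕ, e (g ^ (k + 1)) - o = f (e (g ^ k) - o, x) := by
      intro k
      show _ = F (e (g ^ k) - o + o, e g - o + o) - o
      rw [sub_add_cancel, sub_add_cancel]
      show _ = e (e.symm (e (g ^ k)) * e.symm (e g)) - o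
      rw [e.left_inv (hsrc k), e.left_inv hgsrc, ← pow_succ]
    -- the growth estimate
    have bound : ∀ k : ℕ, ‖e (g ^ k) - o - (k : ℝ) • x‖ ≤ (k : ℝ) / 2 * ‖x‖ := by
      intro k
      induction k with
      | zero => simp [ho]
      | succ k ih =>
        set a := e (g ^ k) - o with ha
        have haδ : ‖a‖ < δ := hdist k
        have h1 : ‖f (a, x) - f (a, 0) - L ((a, x) - (a, 0))‖ ≤ 1/2 * ‖((a, x) : E × E) - (a, 0)‖ := by
          apply hEst
          · rw [Prod.norm_def]
            exact max_lt haδ hxδ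
          · rw [Prod.norm_def, norm_zero]
            exact max_lt haδ hδ
        have h2 : ((a, x) : E × E) - (a, 0) = (0, x) := by simp
        have h3 : f (a, 0) = a := hid1 a (hTgt a haδ)
        rw [h2, hLy x, h3] at h1
        have h4 : ‖((0 : E), x)‖ = ‖x‖ := by rw [Prod.norm_def, norm_zero]; simp
        rw [h4] at h1
        have h5 : e (g ^ (k + 1)) - o - ((k : ℝ) + 1) • x
            = (f (a, x) - a - x) + (a - (k : ℝ) • x) := by
          rw [key k, ← ha, add_smul, one_smul]
          abel
        push_cast
        rw [h5]
        calc ‖(f (a, x) - a - x) + (a - (k : ℝ) • x)‖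
            ≤ ‖f (a, x) - a - x‖ + ‖a - (k : ℝ) • x‖ := norm_add_le _ _
          _ ≤ 1/2 * ‖x‖ + (k : ℝ) / 2 * ‖x‖ := add_le_add h1 ih
          _ = ((k : ℝ) + 1) / 2 * ‖x‖ := by ring
    -- contradiction
    obtain ⟨k, hk⟩ := exists_nat_gt (2 * δ / ‖x‖)
    have h6 : ‖(k : ℝ) • x‖ - ‖e (g ^ k) - o‖ ≤ (k : ℝ) / 2 * ‖x‖ := by
      have := bound k
      have h7 := norm_sub_norm_le ((k : ℝ) • x) (e (g ^ k) - o)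
      rw [← norm_neg] at this
      simp only [neg_sub] at this
      linarith [this, h7]
    rw [norm_smul, Real.norm_natCast] at h6
    have h8 : ‖e (g ^ k) - o‖ < δ := hdist k
    have h9 : 2 * δ < (k : ℝ) * ‖x‖ := by
      rw [div_lt_iff₀ hxpos] at hk
      linarith
    linarith


/-- Let `G` be a compact Lie group acting faithfully and linearly on a
complex vector space `V` via an injective homomorphism `ρ : G →* GL(V)`.  Suppose
`(U n)` is an increasing sequence of finite-dimensional subspaces with `⋃ n, U n = V`,
each `U n` being `G`-invariant, and the induced map `G → GL(U n)` continuous.  (Since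
each `U n` is finite dimensional, continuity of `G → GL(U n)` is expressed equivalently
by requiring that all matrix coefficients `g ↦ φ (ρ g v)`, for `v ∈ U n` and `φ` a linear
functional, are continuous.)  Then there is an `N` such that for all `n ≥ N` the action
of `G` on `U n` is faithful: any `g` acting as the identity on `U n` is the identity. -/
theorem eventually_faithful_on_exhausting_invariant_subspaces
    {E : Type*} [NormedAddCommGroup E] [NormedSpace ℝ E] [FiniteDimensional ℝ E]
    {G : Type*} [TopologicalSpace G] [ChartedSpace E G] [Group G] [IsTopologicalGroup G]
    [LieGroup (modelWithCornersSelf ℝ E) (⊤ : ℕ∞) G] [CompactSpace G]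
    {V : Type*} [AddCommGroup V] [Module ℂ V]
    (ρ : G →* (V ≃ₗ[ℂ] V)) (hinj : Function.Injective ρ)
    (U : ℕ → Submodule ℂ V)
    (hmono : Monotone U)
    (hexh : (⨆ n, U n) = ⊤)
    (hfin : ∀ n, FiniteDimensional ℂ (U n))
    (hGinv : ∀ (n : ℕ) (g : G), ∀ v ∈ U n, ρ g v ∈ U n)
    (hcont : ∀ (n : ℕ) (φ : V →ₗ[ℂ] ℂ), ∀ v ∈ U n,
      Continuous fun g : G => φ (ρ g v)) :
    ∃ N : ℕ, ∀ n ≥ N, ∀ g : G, (∀ v ∈ U n, ρ g v = v) → g = 1 := by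
  obtain ⟨W, hWopen, hW1, hWsmall⟩ :=
    lie_group_no_small_subgroups (E := E) (G := G)
  set K : ℕ → Set G := fun n => {g : G | ∀ v ∈ U n, ρ g v = v} with hK
  have hKclosed : ∀ n, IsClosed (K n) := by
    intro n
    have hKeq : K n = ⋂ (v : U n), ⋂ (φ : V →ₗ[ℂ] ℂ), {g : G | φ (ρ g v) = φ v} := by
      ext g
      simp only [Set.mem_iInter, Set.mem_setOf_eq, hK]
      constructor
      · intro h v φ; rw [h v v.2]
      · intro h v hv
        have h2 : ∀ φ : Module.Dual ℂ V, φ (ρ g v - v) = 0 := by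
          intro φ; rw [map_sub, sub_eq_zero]; exact h ⟨v, hv⟩ φ
        exact sub_eq_zero.mp ((Module.forall_dual_apply_eq_zero_iff ℂ (ρ g v - v)).mp h2)
    rw [hKeq]
    exact isClosed_iInter fun v => isClosed_iInter fun φ =>
      isClosed_eq (hcont n φ v v.2) continuous_const
  have hKanti : ∀ m n, m ≤ n → K n ⊆ K m := fun m n hmn g hg v hv => hg v (hmono hmn hv)
  have hKpow : ∀ n (g : G), g ∈ K n → ∀ k : ℕ, g ^ k ∈ K n := by
    intro n g hg k
    induction k with
    | zero => intro v hv; simp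
    | succ k ih =>
      intro v hv
      rw [pow_succ, map_mul]
      show (ρ (g ^ k)) ((ρ g) v) = v
      rw [hg v hv]
      exact ih v hv
  have hKempty : (⋂ n, (K n ∩ Wᶜ)) = ∅ := by
    rw [Set.eq_empty_iff_forall_notMem]
    intro g hg
    have hfix : ∀ v : V, ρ g v = v := by
      intro v
      have hv : v ∈ ⨆ n, U n := by rw [hexh]; trivial
      obtain ⟨n, hn⟩ := (Submodule.mem_iSup_of_directed U hmono.directed_le).mp hv
      exact (Set.mem_iInter.mp hg n).1 v hn
    have : g = 1 := by
      apply hinj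
      apply LinearEquiv.ext
      intro v
      simp [hfix v]
    rw [this] at hg
    exact (Set.mem_iInter.mp hg 0).2 hW1
  have hEx : ∃ N, K N ∩ Wᶜ = ∅ := by
    by_contra h
    push_neg at h
    have hne : ∀ n, (K n ∩ Wᶜ).Nonempty := fun n => h n
    have hdir : Directed (· ⊇ ·) (fun n => K n ∩ Wᶜ) := by
      intro m n
      exact ⟨max m n,
        Set.inter_subset_inter_left _ (hKanti m _ (le_max_left m n)),
        Set.inter_subset_inter_left _ (hKanti n _ (le_max_right m n))⟩
    have hcomp : ∀ n, IsCompact (K n ∩ Wᶜ) := fun n =>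
      ((hKclosed n).inter hWopen.isClosed_compl).isCompact
    have hcl : ∀ n, IsClosed (K n ∩ Wᶜ) := fun n =>
      (hKclosed n).inter hWopen.isClosed_compl
    have := IsCompact.nonempty_iInter_of_directed_nonempty_isCompact_isClosed
      (fun n => K n ∩ Wᶜ) hdir hne hcomp hcl
    rw [hKempty] at this
    exact Set.not_nonempty_empty this
  obtain ⟨N, hN⟩ := hEx
  refine ⟨N, fun n hn g hgfix => ?_⟩
  have hgK : g ∈ K N := hKanti N n hn hgfix
  refine hWsmall g fun k => ?_
  by_contra hc
  have : g ^ k ∈ K N ∩ Wᶜ := ⟨hKpow N g hgK k, hc⟩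
  rw [hN] at this
  exact this
end

section
/- Let k be a field, G a group, and let M and N be modules over the group algebra k[G]. Suppose M is a semisimple k[G]-module and f : M → N is a surjective k[G]-module homomorphism. Then f maps the invariant subspace M^G onto N^G, i.e., N^G = f(M^G). -/
/-- Let `k` be a field, `G` a group, and let `M`, `N` be modules over the
group algebra `k[G]` (formalized as `MonoidAlgebra k G`).  If `M` is semisimple and
`f : M → N` is a surjective `k[G]`-module homomorphism, then `f` maps the invariant
subspace `M^G` onto `N^G`, i.e. `N^G = f(M^G)`.  Here the invariants of a `k[G]`-module
`P` are `{p : P | ∀ g : G, g • p = p}`, the action of `g ∈ G` being through the canonical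
map `MonoidAlgebra.of k G : G →* k[G]`. -/
theorem surjective_hom_maps_invariants_onto_invariants
    {k : Type*} [Field k] {G : Type*} [Group G]
    {M N : Type*} [AddCommGroup M] [AddCommGroup N]
    [Module (MonoidAlgebra k G) M] [Module (MonoidAlgebra k G) N]
    [IsSemisimpleModule (MonoidAlgebra k G) M]
    (f : M →ₗ[MonoidAlgebra k G] N) (hf : Function.Surjective f) :
    {x : N | ∀ g : G, MonoidAlgebra.of k G g • x = x} =
      f '' {m : M | ∀ g : G, MonoidAlgebra.of k G g • m = m} := by
  obtain ⟨C, hC⟩ := exists_isCompl (LinearMap.ker f)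
  ext n
  constructor
  · intro hn
    obtain ⟨m0, hm0⟩ := hf n
    have hmem : m0 ∈ LinearMap.ker f ⊔ C := by
      rw [hC.sup_eq_top]; trivial
    obtain ⟨a, ha, c, hc, rfl⟩ := Submodule.mem_sup.mp hmem
    have hfc : f c = n := by
      rw [map_add, LinearMap.mem_ker.mp ha, zero_add] at hm0
      exact hm0
    refine ⟨c, fun g => ?_, hfc⟩
    have h1 : MonoidAlgebra.of k G g • c - c ∈ C := C.sub_mem (C.smul_mem _ hc) hc
    have h2 : MonoidAlgebra.of k G g • c - c ∈ LinearMap.ker f := by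
      rw [LinearMap.mem_ker, map_sub, map_smul, hfc, hn g, sub_self]
    have h0 : MonoidAlgebra.of k G g • c - c = 0 :=
      (Submodule.mem_bot _).mp (hC.inf_eq_bot ▸ Submodule.mem_inf.mpr ⟨h2, h1⟩)
    exact sub_eq_zero.mp h0
  · rintro ⟨m, hm, rfl⟩ g
    rw [← map_smul, hm g]
end

section
/- Let V = ⊕_{n∈ℤ} V_n be a ℤ-graded complex vector space whose truncations V_{≤n} = ⊕_{m≤n} V_m are finite-dimensional for every n ∈ ℤ. Let G be a group acting ℂ-linearly on V preserving each V_n, and suppose V is a semisimple module over the group algebra ℂ[G]. Let S be a set of G-equivariant homogeneous linear endomorphisms of V and let A ⊆ End_ℂ(V) be the unital subalgebra generated by S. Assume: (i) S contains a homogeneous operator h of degree 0 acting on each V_n as multiplication by the scalar n; (ii) for every n ∈ ℤ and every G-equivariant linear endomorphism T of V_{≤n}, there exists a ∈ A whose compression to V_{≤n} equals T. Then for every irreducible ℂ[G]-module W, the multiplicity space Hom_{ℂ[G]}(W, V), made into an A-module via a·f = a ∘ f, is either zero or a simple A-module. -/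
private lemma biSup_ind {R V : Type*} [Semiring R] [AddCommMonoid V] [Module R V]
    (Q : ℤ → Submodule R V) (c : ℤ → Prop) {P : V → Prop}
    (hmem : ∀ m, c m → ∀ v ∈ Q m, P v) (h0 : P 0)
    (hadd : ∀ x y, P x → P y → P (x + y)) :
    ∀ v ∈ (⨆ m, ⨆ (_ : c m), Q m), P v := by
  intro v hv
  refine Submodule.iSup_induction (motive := P) (fun m => ⨆ (_ : c m), Q m) hv ?_ h0 hadd
  intro m x hx
  change x ∈ ⨆ (_ : c m), Q m at hx
  by_cases hc : c m
  · exact hmem m hc x (by rwa [iSup_pos hc] at hx)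
  · rw [iSup_neg hc, Submodule.mem_bot] at hx
    exact hx ▸ h0

private lemma biSup_map_mem {R V : Type*} [Semiring R] [AddCommMonoid V] [Module R V]
    (Q : ℤ → Submodule R V) (c : ℤ → Prop) (L : V →ₗ[R] V) (M : Submodule R V)
    (hmem : ∀ m, c m → ∀ v ∈ Q m, L v ∈ M) :
    ∀ v ∈ (⨆ m, ⨆ (_ : c m), Q m), L v ∈ M := by
  refine biSup_ind Q c (P := fun v => L v ∈ M) hmem ?_ ?_
  · show L 0 ∈ M
    rw [map_zero]; exact zero_mem M
  · intro x y hx hy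
    have hx' : L x ∈ M := hx
    have hy' : L y ∈ M := hy
    show L (x + y) ∈ M
    rw [map_add]; exact add_mem hx' hy'

private lemma biSup_map_eq {R V : Type*} [Semiring R] [AddCommMonoid V] [Module R V]
    (Q : ℤ → Submodule R V) (c : ℤ → Prop) (L L' : V →ₗ[R] V)
    (hmem : ∀ m, c m → ∀ v ∈ Q m, L v = L' v) :
    ∀ v ∈ (⨆ m, ⨆ (_ : c m), Q m), L v = L' v := by
  refine biSup_ind Q c (P := fun v => L v = L' v) hmem ?_ ?_
  · show L 0 = L' 0
    rw [map_zero, map_zero]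
  · intro x y hx hy
    have hx' : L x = L' x := hx
    have hy' : L y = L' y := hy
    show L (x + y) = L' (x + y)
    rw [map_add, map_add, hx', hy']

private lemma biSup_disj {ι R N : Type*} [DecidableEq ι] [Ring R] [AddCommGroup N] [Module R N]
    {p : ι → Submodule R N} (hp : iSupIndep p) (c d : ι → Prop) [DecidablePred c]
    [DecidablePred d] (hcd : ∀ i, c i → d i → False) {x : N}
    (hc : x ∈ ⨆ i, ⨆ (_ : c i), p i) (hd : x ∈ ⨆ i, ⨆ (_ : d i), p i) : x = 0 := by
  obtain ⟨f, hf⟩ := (Submodule.mem_biSup_iff_exists_dfinsupp c p x).mp hc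
  obtain ⟨g, hg⟩ := (Submodule.mem_biSup_iff_exists_dfinsupp d p x).mp hd
  have hinj := (iSupIndep_iff_dfinsupp_lsum_injective p).mp hp
  have hfg : f.filter c = g.filter d := hinj (hf.trans hg.symm)
  have h0 : f.filter c = 0 := by
    ext i
    by_cases hci : c i
    · have h1 : (f.filter c) i = (g.filter d) i := by rw [hfg]
      rw [DFinsupp.filter_apply_pos f hci] at h1
      have hdi : ¬ d i := fun hdi => hcd i hci hdi
      rw [DFinsupp.filter_apply_neg g hdi] at h1
      simp only [DFinsupp.filter_apply_pos f hci, h1, DFinsupp.coe_zero, Pi.zero_apply]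
    · simp [DFinsupp.filter_apply_neg f hci]
  rw [← hf, h0, map_zero]

/-- Let `V = ⊕_{n ∈ ℤ} V_n` be a ℤ-graded complex vector space with
finite-dimensional truncations `V_{≤n} = ⊕_{m ≤ n} V_m`.  A group `G` acts ℂ-linearly on
`V` preserving each `V_n` (the `G`-action is encoded by a module structure over the group
algebra `MonoidAlgebra ℂ G` compatible with the ℂ-structure; `g` acts as
`MonoidAlgebra.of ℂ G g • ·`), and `V` is a semisimple `ℂ[G]`-module.  `S` is a set of
`G`-equivariant homogeneous endomorphisms of `V`, and `A = Algebra.adjoin ℂ S` is the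
unital subalgebra it generates.  Assume (i) `S` contains a degree-`0` operator acting on
`V_n` as multiplication by `n`, and (ii) every `G`-equivariant endomorphism `T` of
`V_{≤n}` is the compression of some `a ∈ A` (i.e. `a v - T v` lies in `⊕_{m > n} V_m`
for all `v ∈ V_{≤n}`).  Then for every irreducible `ℂ[G]`-module `W`, the multiplicity
space `Hom_{ℂ[G]}(W, V)` is zero or a simple `A`-module (where `a • f = a ∘ f`).  This
is expressed equivalently as: every nonzero `f` generates the whole space under the
`A`-action, i.e. for all `f ≠ 0` and all `g` there is `a ∈ A` with `a ∘ f = g`. -/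
theorem multiplicity_space_zero_or_simple
    {G : Type*} [Group G]
    {V : Type*} [AddCommGroup V] [Module ℂ V]
    [Module (MonoidAlgebra ℂ G) V] [IsScalarTower ℂ (MonoidAlgebra ℂ G) V]
    [IsSemisimpleModule (MonoidAlgebra ℂ G) V]
    (Vgr : ℤ → Submodule ℂ V) (hgr : DirectSum.IsInternal Vgr)
    (hfin : ∀ n : ℤ, FiniteDimensional ℂ ↥(⨆ m ≤ n, Vgr m))
    (hGinv : ∀ (n : ℤ) (g : G), ∀ v ∈ Vgr n, MonoidAlgebra.of ℂ G g • v ∈ Vgr n)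
    (S : Set (Module.End ℂ V))
    (hSequiv : ∀ a ∈ S, ∀ (g : G) (v : V),
      a (MonoidAlgebra.of ℂ G g • v) = MonoidAlgebra.of ℂ G g • a v)
    (hShomog : ∀ a ∈ S, ∃ d : ℤ, ∀ m : ℤ, ∀ v ∈ Vgr m, a v ∈ Vgr (m + d))
    (hdeg : ∃ h ∈ S, ∀ n : ℤ, ∀ v ∈ Vgr n, h v = (n : ℂ) • v)
    (hcompr : ∀ (n : ℤ) (T : ↥(⨆ m ≤ n, Vgr m) →ₗ[ℂ] ↥(⨆ m ≤ n, Vgr m)),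
      (∀ (g : G) (v w : ↥(⨆ m ≤ n, Vgr m)),
        (w : V) = MonoidAlgebra.of ℂ G g • (v : V) →
        (T w : V) = MonoidAlgebra.of ℂ G g • (T v : V)) →
      ∃ a ∈ Algebra.adjoin ℂ S, ∀ v : ↥(⨆ m ≤ n, Vgr m),
        a (v : V) - (T v : V) ∈ ⨆ m > n, Vgr m)
    {W : Type*} [AddCommGroup W] [Module (MonoidAlgebra ℂ G) W]
    [IsSimpleModule (MonoidAlgebra ℂ G) W] :
    ∀ f g : W →ₗ[MonoidAlgebra ℂ G] V, f ≠ 0 →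
      ∃ a ∈ Algebra.adjoin ℂ S, ∀ w : W, a (f w) = g w := by
  classical
  obtain ⟨h, hhS, hhdeg⟩ := hdeg
  intro f g hf0
  -- basic lattice facts
  have hVle : ∀ (c : ℤ → Prop) (m : ℤ), c m → Vgr m ≤ ⨆ m, ⨆ (_ : c m), Vgr m :=
    fun c m hc => le_iSup₂ (f := fun m (_ : c m) => Vgr m) m hc
  have hUmono : ∀ {n n' : ℤ}, n ≤ n' →
      (⨆ m ≤ n, Vgr m) ≤ ⨆ m ≤ n', Vgr m :=
    fun {n n'} hnn' => biSup_mono fun m hm => hm.trans hnn'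
  -- invariance of truncations under the G-action
  have hMinv : ∀ (c : ℤ → Prop) (x : MonoidAlgebra ℂ G),
      ∀ v ∈ (⨆ m, ⨆ (_ : c m), Vgr m), x • v ∈ (⨆ m, ⨆ (_ : c m), Vgr m) := by
    intro c x
    refine MonoidAlgebra.induction_on
      (motive := fun x => ∀ v ∈ (⨆ m, ⨆ (_ : c m), Vgr m), x • v ∈ ⨆ m, ⨆ (_ : c m), Vgr m)
      x ?_ ?_ ?_
    · intro gg v hv
      refine biSup_ind Vgr c
        (P := fun v => MonoidAlgebra.of ℂ G gg • v ∈ ⨆ m, ⨆ (_ : c m), Vgr m) ?_ ?_ ?_ v hv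
      · intro m hm w hw
        exact hVle c m hm (hGinv m gg w hw)
      · show MonoidAlgebra.of ℂ G gg • (0 : V) ∈ _
        rw [smul_zero]; exact zero_mem _
      · intro x y hx hy
        have hx' : MonoidAlgebra.of ℂ G gg • x ∈ ⨆ m, ⨆ (_ : c m), Vgr m := hx
        have hy' : MonoidAlgebra.of ℂ G gg • y ∈ ⨆ m, ⨆ (_ : c m), Vgr m := hy
        show MonoidAlgebra.of ℂ G gg • (x + y) ∈ _
        rw [smul_add]; exact add_mem hx' hy'
    · intro x y hx hy v hv
      rw [add_smul]; exact add_mem (hx v hv) (hy v hv)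
    · intro r x hx v hv
      rw [smul_assoc]; exact Submodule.smul_mem _ r (hx v hv)
  -- every vector lies in some truncation
  have hmemU : ∀ v : V, ∃ n : ℤ, v ∈ ⨆ m ≤ n, Vgr m := by
    intro v
    have hdir : Directed (· ≤ ·) (fun n : ℤ => ⨆ m ≤ n, Vgr m) := fun i j =>
      ⟨max i j, hUmono (le_max_left i j), hUmono (le_max_right i j)⟩
    have h1 : v ∈ ⨆ n : ℤ, ⨆ m ≤ n, Vgr m := by
      have h2 : (⊤ : Submodule ℂ V) ≤ ⨆ n : ℤ, ⨆ m ≤ n, Vgr m := by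
        rw [← hgr.submodule_iSup_eq_top]
        exact iSup_le fun m =>
          le_trans (hVle (fun k => k ≤ m) m le_rfl) (le_iSup (fun n : ℤ => ⨆ m ≤ n, Vgr m) m)
      exact h2 Submodule.mem_top
    exact (Submodule.mem_iSup_of_directed _ hdir).mp h1
  -- f is injective
  have hinj : Function.Injective f := by
    rw [← LinearMap.ker_eq_bot]
    rcases eq_bot_or_eq_top (LinearMap.ker f) with h1 | h1
    · exact h1
    · exact absurd (LinearMap.ker_eq_top.mp h1) hf0
  -- W is cyclic
  haveI : Nontrivial W := IsSimpleModule.nontrivial (MonoidAlgebra ℂ G) W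
  obtain ⟨w₀, hw₀⟩ := exists_ne (0 : W)
  have hspan : Submodule.span (MonoidAlgebra ℂ G) {w₀} = ⊤ := by
    rcases eq_bot_or_eq_top (Submodule.span (MonoidAlgebra ℂ G) {w₀}) with h1 | h1
    · exact absurd (Submodule.mem_bot _ |>.mp
        (h1 ▸ Submodule.mem_span_singleton_self w₀)) hw₀
    · exact h1
  have hcyc : ∀ w : W, ∃ x : MonoidAlgebra ℂ G, x • w₀ = w := fun w =>
    Submodule.mem_span_singleton.mp (hspan ▸ Submodule.mem_top)
  -- choose a truncation containing the images of f and g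
  obtain ⟨n₁, hn₁⟩ := hmemU (f w₀)
  obtain ⟨n₂, hn₂⟩ := hmemU (g w₀)
  set n := max n₁ n₂ with hn
  have hfw₀ : f w₀ ∈ ⨆ m ≤ n, Vgr m := hUmono (le_max_left _ _) hn₁
  have hgw₀ : g w₀ ∈ ⨆ m ≤ n, Vgr m := hUmono (le_max_right _ _) hn₂
  have hfU : ∀ w : W, f w ∈ ⨆ m ≤ n, Vgr m := by
    intro w
    obtain ⟨x, hx⟩ := hcyc w
    rw [← hx, map_smul]
    exact hMinv _ x _ hfw₀
  have hgU : ∀ w : W, g w ∈ ⨆ m ≤ n, Vgr m := by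
    intro w
    obtain ⟨x, hx⟩ := hcyc w
    rw [← hx, map_smul]
    exact hMinv _ x _ hgw₀
  -- the G-equivariant map T : V → V with T ∘ f = g
  obtain ⟨Cf, hCf⟩ := exists_isCompl (LinearMap.range f)
  set e := LinearEquiv.ofInjective f hinj with he
  set π := Submodule.linearProjOfIsCompl _ Cf hCf with hπ
  set T : V →ₗ[MonoidAlgebra ℂ G] V := g ∘ₗ (e.symm.toLinearMap ∘ₗ π) with hT
  have hTf : ∀ w : W, T (f w) = g w := by
    intro w
    have h1 : π (f w) = ⟨f w, LinearMap.mem_range_self f w⟩ :=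
      Submodule.linearProjOfIsCompl_apply_left hCf ⟨f w, LinearMap.mem_range_self f w⟩
    have h2 : e w = ⟨f w, LinearMap.mem_range_self f w⟩ :=
      Subtype.ext (LinearEquiv.ofInjective_apply f w)
    have h3 : e.symm ⟨f w, LinearMap.mem_range_self f w⟩ = w := by
      rw [← h2, LinearEquiv.symm_apply_apply]
    simp only [hT, LinearMap.comp_apply, LinearEquiv.coe_coe]
    rw [h1]
    exact congrArg g h3
  have hTmem : ∀ v : V, T v ∈ ⨆ m ≤ n, Vgr m := fun v => hgU _
  -- its compression to the truncation
  set Tc : V →ₗ[ℂ] V := T.restrictScalars ℂ with hTc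
  have hTcU : ∀ x ∈ (⨆ m ≤ n, Vgr m), Tc x ∈ (⨆ m ≤ n, Vgr m) := fun x _ => hTmem x
  set T' : ↥(⨆ m ≤ n, Vgr m) →ₗ[ℂ] ↥(⨆ m ≤ n, Vgr m) := Tc.restrict hTcU with hT'
  have hequiv : ∀ (gg : G) (v w : ↥(⨆ m ≤ n, Vgr m)),
      (w : V) = MonoidAlgebra.of ℂ G gg • (v : V) →
      (T' w : V) = MonoidAlgebra.of ℂ G gg • (T' v : V) := by
    intro gg v w hw
    rw [hT', LinearMap.restrict_coe_apply, LinearMap.restrict_coe_apply]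
    show T ↑w = MonoidAlgebra.of ℂ G gg • T ↑v
    rw [hw]
    exact T.map_smul _ _
  obtain ⟨a, haA, hka⟩ := hcompr n T' hequiv
  -- degree bound for elements of the adjoined algebra
  have hbound : ∀ b ∈ Algebra.adjoin ℂ S, ∃ D : ℕ, ∀ (k : ℤ),
      ∀ v ∈ (⨆ m ≤ k, Vgr m), b v ∈ ⨆ m ≤ k + (D : ℤ), Vgr m := by
    intro b hb
    induction hb using Algebra.adjoin_induction with
    | mem x hx =>
      obtain ⟨d, hd⟩ := hShomog x hx
      refine ⟨d.toNat, fun k v hv => ?_⟩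
      refine biSup_map_mem Vgr (fun m => m ≤ k) x (⨆ m ≤ k + (d.toNat : ℤ), Vgr m)
        ?_ v hv
      intro m hm w hw
      exact hVle _ (m + d) (by omega) (hd m w hw)
    | algebraMap r =>
      refine ⟨0, fun k v hv => ?_⟩
      rw [Module.algebraMap_end_apply]
      have hk : k + ((0 : ℕ) : ℤ) = k := by simp
      rw [hk]
      exact Submodule.smul_mem _ r hv
    | add x y hx hy ihx ihy =>
      obtain ⟨Dx, hDx⟩ := ihx
      obtain ⟨Dy, hDy⟩ := ihy
      refine ⟨max Dx Dy, fun k v hv => ?_⟩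
      rw [LinearMap.add_apply]
      refine add_mem (hUmono ?_ (hDx k v hv)) (hUmono ?_ (hDy k v hv))
      · exact add_le_add_right (by exact_mod_cast le_max_left Dx Dy) k
      · exact add_le_add_right (by exact_mod_cast le_max_right Dx Dy) k
    | mul x y hx hy ihx ihy =>
      obtain ⟨Dx, hDx⟩ := ihx
      obtain ⟨Dy, hDy⟩ := ihy
      refine ⟨Dx + Dy, fun k v hv => ?_⟩
      rw [Module.End.mul_apply]
      have h1 := hDx (k + (Dy : ℤ)) (y v) (hDy k v hv)
      refine hUmono ?_ h1
      push_cast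
      omega
  obtain ⟨D, hD⟩ := hbound a haA
  -- finitely many nonzero graded pieces below n
  have ind := hgr.submodule_iSupIndep
  have hNBfin : {m : ℤ | m ≤ n ∧ Vgr m ≠ ⊥}.Finite := by
    set NB : Set ℤ := {m : ℤ | m ≤ n ∧ Vgr m ≠ ⊥} with hNBdef
    have hch : ∀ m : NB, ∃ v : V, v ∈ Vgr m ∧ v ≠ 0 := fun m =>
      Submodule.exists_mem_ne_zero_of_ne_bot m.2.2
    choose x hx hx0 using hch
    have hli : LinearIndependent ℂ x :=
      iSupIndep.linearIndependent _ (ind.comp Subtype.val_injective) hx hx0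
    haveI := hfin n
    set y : NB → ↥(⨆ m ≤ n, Vgr m) :=
      fun m => ⟨x m, hVle (fun k => k ≤ n) m m.2.1 (hx m)⟩ with hy
    have hliy : LinearIndependent ℂ y :=
      LinearIndependent.of_comp (⨆ m ≤ n, Vgr m).subtype hli
    haveI : Finite NB := hliy.finite
    exact NB.toFinite
  -- Lagrange interpolation polynomial
  set sNodes : Finset ℤ := hNBfin.toFinset ∪ Finset.Ioc n (n + (D : ℤ)) with hsN
  set r : ℤ → ℂ := fun m => if m ≤ n then 1 else 0 with hr
  set p : Polynomial ℂ := Lagrange.interpolate sNodes (fun m : ℤ => (m : ℂ)) r with hp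
  have hvinj : Set.InjOn (fun m : ℤ => (m : ℂ)) sNodes := fun a _ b _ hab => Int.cast_injective hab
  set q : Module.End ℂ V := Polynomial.aeval h p with hq
  have hh : h ∈ Algebra.adjoin ℂ S := Algebra.subset_adjoin hhS
  have hqA : q ∈ Algebra.adjoin ℂ S := by
    have h2 : Polynomial.aeval h p
        = ((Polynomial.aeval (⟨h, hh⟩ : Algebra.adjoin ℂ S) p :
            Algebra.adjoin ℂ S) : Module.End ℂ V) :=
      Polynomial.aeval_algHom_apply (Algebra.adjoin ℂ S).val (⟨h, hh⟩ : Algebra.adjoin ℂ S) p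
    rw [hq, h2]
    exact SetLike.coe_mem _
  have hqeig : ∀ m : ℤ, ∀ v ∈ Vgr m, q v = Polynomial.eval ((m : ℂ)) p • v := by
    intro m v hv
    by_cases hv0 : v = 0
    · rw [hv0, map_zero, smul_zero]
    · exact Module.End.aeval_apply_of_hasEigenvector
        ⟨Module.End.mem_eigenspace_iff.mpr (hhdeg m v hv), hv0⟩
  have hqval1 : ∀ m : ℤ, m ≤ n → ∀ v ∈ Vgr m, q v = v := by
    intro m hm v hv
    by_cases hbot : Vgr m = ⊥
    · rw [hbot, Submodule.mem_bot] at hv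
      rw [hv, map_zero]
    · have hmem : m ∈ sNodes :=
        Finset.mem_union_left _ (hNBfin.mem_toFinset.mpr ⟨hm, hbot⟩)
      rw [hqeig m v hv, hp, Lagrange.eval_interpolate_at_node r hvinj hmem, hr]
      simp [if_pos hm]
  have hqval0 : ∀ m : ℤ, n < m → m ≤ n + (D : ℤ) → ∀ v ∈ Vgr m, q v = 0 := by
    intro m hm1 hm2 v hv
    have hmem : m ∈ sNodes :=
      Finset.mem_union_right _ (Finset.mem_Ioc.mpr ⟨hm1, hm2⟩)
    rw [hqeig m v hv, hp, Lagrange.eval_interpolate_at_node r hvinj hmem, hr]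
    simp [if_neg (not_le.mpr hm1)]
  have hq_id : ∀ v ∈ (⨆ m ≤ n, Vgr m), q v = v := by
    intro v hv
    exact biSup_map_eq Vgr (fun m => m ≤ n) q LinearMap.id
      (fun m hm v hv => hqval1 m hm v hv) v hv
  have hq_low : ∀ v ∈ (⨆ m ≤ n + (D : ℤ), Vgr m), q v ∈ (⨆ m ≤ n, Vgr m) := by
    refine biSup_map_mem Vgr (fun m => m ≤ n + (D : ℤ)) q _ ?_
    intro m hm v hv
    by_cases hm' : m ≤ n
    · rw [hqval1 m hm' v hv]
      exact hVle (fun k => k ≤ n) m hm' hv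
    · rw [hqval0 m (not_le.mp hm') hm v hv]
      exact zero_mem _
  have hq_high : ∀ v ∈ (⨆ m, ⨆ (_ : m > n), Vgr m), q v ∈ (⨆ m, ⨆ (_ : m > n), Vgr m) := by
    refine biSup_map_mem Vgr (fun m => m > n) q _ ?_
    intro m hm v hv
    rw [hqeig m v hv]
    exact hVle (fun k => k > n) m hm (Submodule.smul_mem _ _ hv)
  -- conclusion
  refine ⟨q * a, mul_mem hqA haA, ?_⟩
  intro w
  have hfw : f w ∈ ⨆ m ≤ n, Vgr m := hfU w
  have hkey := hka ⟨f w, hfw⟩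
  have hT'v : ((T' ⟨f w, hfw⟩ : ↥(⨆ m ≤ n, Vgr m)) : V) = g w := by
    rw [hT', LinearMap.restrict_coe_apply]
    show T (f w) = g w
    exact hTf w
  rw [hT'v] at hkey
  have herr2 : a (f w) - g w ∈ ⨆ m ≤ n + (D : ℤ), Vgr m := by
    refine sub_mem (hD n (f w) hfw) (hUmono ?_ (hgU w))
    omega
  have hqerr : q (a (f w) - g w) = 0 :=
    biSup_disj ind (fun m => m ≤ n) (fun m => n < m)
      (fun m h1 h2 => absurd h1 (not_le.mpr h2)) (hq_low _ herr2) (hq_high _ hkey)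
  have h5 : a (f w) = g w + (a (f w) - g w) := (add_sub_cancel _ _).symm
  rw [Module.End.mul_apply, h5, map_add, hqerr, add_zero]
  exact hq_id _ (hgU w)
end

section
/- Let 𝔤 be a Lie algebra over ℂ and let V = ⊕_{n∈ℤ} V_n be a ℤ-graded complex vector space whose truncations V_{≤n} = ⊕_{m≤n} V_m are finite-dimensional for every n ∈ ℤ. Suppose 𝔤 acts on V by linear operators preserving each V_n, and V is a semisimple 𝔤-module. Let S be a set of 𝔤-equivariant homogeneous linear endomorphisms of V and let A ⊆ End_ℂ(V) be the unital subalgebra generated by S. Assume: (i) S contains a homogeneous operator h of degree 0 acting on each V_n as multiplication by the scalar n; (ii) for every n ∈ ℤ and every 𝔤-equivariant linear endomorphism T of V_{≤n}, there exists a ∈ A whose compression to V_{≤n} equals T. Then for every irreducible 𝔤-module M, the multiplicity space Hom_𝔤(M, V), made into an A-module via a·f = a ∘ f, is either zero or a simple A-module; and for non-isomorphic irreducible 𝔤-modules M, M′ with both multiplicity spaces nonzero, Hom_𝔤(M, V) and Hom_𝔤(M′, V) are non-isomorphic A-modules. -/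
set_option linter.unusedSectionVars false

section Aux
variable {V : Type*} [AddCommGroup V] [Module ℂ V] {Vgr : ℤ → Submodule ℂ V}

/-- projection onto the `m`-th graded component -/
noncomputable def piC (hgr : DirectSum.IsInternal Vgr) (m : ℤ) : V →ₗ[ℂ] V :=
  (Vgr m).subtype ∘ₗ (DirectSum.component ℂ ℤ (fun n => ↥(Vgr n)) m) ∘ₗ
    (LinearEquiv.ofBijective (DirectSum.coeLinearMap Vgr) hgr).symm.toLinearMap

lemma piC_apply (hgr : DirectSum.IsInternal Vgr) (m : ℤ) (v : V) :
    piC hgr m v =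
      ((LinearEquiv.ofBijective (DirectSum.coeLinearMap Vgr) hgr).symm v m : V) := rfl

lemma piC_mem (hgr : DirectSum.IsInternal Vgr) (m : ℤ) (v : V) :
    piC hgr m v ∈ Vgr m :=
  ((LinearEquiv.ofBijective (DirectSum.coeLinearMap Vgr) hgr).symm v m).2

lemma piC_of_mem (hgr : DirectSum.IsInternal Vgr) {m : ℤ} {v : V} (hv : v ∈ Vgr m) :
    piC hgr m v = v := by
  rw [piC_apply, hgr.ofBijective_coeLinearMap_of_mem hv]

lemma piC_of_mem_ne (hgr : DirectSum.IsInternal Vgr) {m k : ℤ} (hk : k ≠ m) {v : V}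
    (hv : v ∈ Vgr m) : piC hgr k v = 0 := by
  rw [piC_apply, hgr.ofBijective_coeLinearMap_of_mem_ne (Ne.symm hk) hv,
    Submodule.coe_zero]

lemma piC_sum (hgr : DirectSum.IsInternal Vgr) (D : Finset ℤ) {v : V}
    (hD : ∀ k ∉ D, piC hgr k v = 0) : ∑ m ∈ D, piC hgr m v = v := by
  classical
  set w := (LinearEquiv.ofBijective (DirectSum.coeLinearMap Vgr) hgr).symm v with hw
  have hsupp : DFinsupp.support w ⊆ D := by
    intro k hk
    by_contra hkD
    have := hD k hkD
    rw [piC_apply, ← hw, Submodule.coe_eq_zero] at this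
    exact (DFinsupp.mem_support_iff.1 hk) this
  have hv : DirectSum.coeLinearMap Vgr w = v :=
    (LinearEquiv.ofBijective (DirectSum.coeLinearMap Vgr) hgr).apply_symm_apply v
  conv_rhs => rw [← hv]
  rw [DirectSum.coeLinearMap_eq_dfinsuppSum, DFinsupp.sum]
  have hterm : ∀ k ∈ D, piC hgr k v = ((w k : V)) := fun k _ => rfl
  rw [Finset.sum_congr rfl hterm]
  exact (Finset.sum_subset hsupp fun k _ hk => by
    rw [DFinsupp.notMem_support_iff.1 hk, Submodule.coe_zero]).symm

lemma piC_eq_zero_of_mem (hgr : DirectSum.IsInternal Vgr) {s : Set ℤ} {v : V}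
    (hv : v ∈ ⨆ m ∈ s, Vgr m) {k : ℤ} (hk : k ∉ s) : piC hgr k v = 0 := by
  have hle : (⨆ m ∈ s, Vgr m) ≤ LinearMap.ker (piC hgr k) := by
    refine iSup₂_le fun m hm => fun u hu => ?_
    exact LinearMap.mem_ker.2 (piC_of_mem_ne hgr (fun h => hk (by rw [h]; exact hm)) hu)
  exact LinearMap.mem_ker.1 (hle hv)

/-- every finite-dimensional subspace has a finite set of degrees supporting it -/
lemma exists_covering (hgr : DirectSum.IsInternal Vgr) (X : Submodule ℂ V)
    [FiniteDimensional ℂ X] :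
    ∃ D : Finset ℤ, ∀ v ∈ X, ∀ k ∉ D, piC hgr k v = 0 := by
  classical
  obtain ⟨n, s, hs⟩ := Module.Finite.exists_fin (R := ℂ) (M := X)
  set D : Finset ℤ := Finset.univ.biUnion fun i => DFinsupp.support
    ((LinearEquiv.ofBijective (DirectSum.coeLinearMap Vgr) hgr).symm (s i : V)) with hD
  refine ⟨D, fun v hv k hk => ?_⟩
  have hXle : X ≤ Submodule.span ℂ (⇑X.subtype '' Set.range s : Set V) := by
    rw [← Submodule.map_span, hs, Submodule.map_subtype_top]
  have hgen : (⇑X.subtype '' Set.range s : Set V) ⊆ ↑(LinearMap.ker (piC hgr k)) := by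
    rintro - ⟨-, ⟨i, rfl⟩, rfl⟩
    have : k ∉ DFinsupp.support
        ((LinearEquiv.ofBijective (DirectSum.coeLinearMap Vgr) hgr).symm (s i : V)) :=
      fun h => hk (Finset.mem_biUnion.2 ⟨i, Finset.mem_univ i, h⟩)
    simp only [SetLike.mem_coe, LinearMap.mem_ker, piC_apply, Submodule.subtype_apply]
    rw [DFinsupp.notMem_support_iff.1 this, Submodule.coe_zero]
  exact LinearMap.mem_ker.1 ((Submodule.span_le.2 hgen) (hXle hv))


variable {L : Type*} [LieRing L] [LieAlgebra ℂ L]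

section Lie
variable [LieRingModule L V] [LieModule ℂ L V]

lemma adjoin_equiv {S : Set (Module.End ℂ V)}
    (hSequiv : ∀ a ∈ S, ∀ (x : L) (v : V), a ⁅x, v⁆ = ⁅x, a v⁆) :
    ∀ a ∈ Algebra.adjoin ℂ S, ∀ (x : L) (v : V), a ⁅x, v⁆ = ⁅x, a v⁆ := by
  intro a ha
  induction ha using Algebra.adjoin_induction with
  | mem b hb => exact hSequiv b hb
  | algebraMap r =>
      intro x v
      simp only [Module.algebraMap_end_apply, lie_smul]
  | add b c hb hc ihb ihc =>
      intro x v
      simp only [LinearMap.add_apply, ihb x v, ihc x v, lie_add]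
  | mul b c hb hc ihb ihc =>
      intro x v
      simp only [Module.End.mul_apply, ihb x _, ihc x v]

lemma piC_lie (hgr : DirectSum.IsInternal Vgr)
    (hLinv : ∀ (n : ℤ) (x : L), ∀ v ∈ Vgr n, ⁅x, v⁆ ∈ Vgr n)
    (k : ℤ) (x : L) (v : V) :
    piC hgr k ⁅x, v⁆ = ⁅x, piC hgr k v⁆ := by
  set A1 := piC hgr k ∘ₗ (LieModule.toEnd ℂ L V x) with hA1
  set A2 := (LieModule.toEnd ℂ L V x) ∘ₗ piC hgr k with hA2
  have hle : (⨆ m, Vgr m) ≤ LinearMap.ker (A1 - A2) := by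
    refine iSup_le fun m => fun u hu => LinearMap.mem_ker.2 ?_
    have hlu : ⁅x, u⁆ ∈ Vgr m := hLinv m x u hu
    simp only [hA1, hA2, LinearMap.sub_apply, LinearMap.comp_apply,
      LieModule.toEnd_apply_apply]
    rcases eq_or_ne k m with rfl | hne
    · rw [piC_of_mem hgr hu, piC_of_mem hgr hlu, sub_self]
    · rw [piC_of_mem_ne hgr hne hu, piC_of_mem_ne hgr hne hlu, lie_zero, sub_self]
  have hv : v ∈ ⨆ m, Vgr m := hgr.submodule_iSup_eq_top ▸ Submodule.mem_top
  have h0 : A1 v - A2 v = 0 := hle hv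
  have h1 : A1 v = A2 v := sub_eq_zero.1 h0
  simpa [hA1, hA2, LieModule.toEnd_apply_apply] using h1

end Lie

lemma aeval_on_graded {h : Module.End ℂ V}
    (hdeg : ∀ n : ℤ, ∀ v ∈ Vgr n, h v = (n : ℂ) • v) (p : Polynomial ℂ) (m : ℤ) {v : V}
    (hv : v ∈ Vgr m) : (Polynomial.aeval h p) v = p.eval (m : ℂ) • v := by
  induction p using Polynomial.induction_on' with
  | add p q hp hq => simp only [map_add, LinearMap.add_apply, hp, hq,
      Polynomial.eval_add, add_smul]
  | monomial n a =>
      have hpow : ∀ k : ℕ, (h ^ k) v = ((m : ℂ) ^ k) • v := by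
        intro k; induction k with
        | zero => simp
        | succ k ih =>
            rw [pow_succ, Module.End.mul_apply, hdeg m v hv, map_smul, ih, smul_smul,
              mul_comm, ← pow_succ]
      rw [Polynomial.aeval_monomial, Polynomial.eval_monomial, Module.End.mul_apply,
        hpow, Module.algebraMap_end_apply, smul_smul]

lemma filter_op (hgr : DirectSum.IsInternal Vgr) {S : Set (Module.End ℂ V)} {h : Module.End ℂ V}
    (hhS : h ∈ S) (hdeg : ∀ n : ℤ, ∀ v ∈ Vgr n, h v = (n : ℂ) • v)
    (D : Finset ℤ) (q : ℤ → ℂ) :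
    ∃ c ∈ Algebra.adjoin ℂ S, ∀ v : V, (∀ k ∉ D, piC hgr k v = 0) →
      c v = ∑ m ∈ D, q m • piC hgr m v := by
  classical
  set p := Lagrange.interpolate D (fun m : ℤ => (m : ℂ)) q with hp
  refine ⟨Polynomial.aeval h p, ?_, ?_⟩
  · have hmem : Polynomial.aeval h p ∈ Algebra.adjoin ℂ ({h} : Set (Module.End ℂ V)) := by
      rw [Algebra.adjoin_singleton_eq_range_aeval]; exact ⟨p, rfl⟩
    exact Algebra.adjoin_mono (Set.singleton_subset_iff.2 hhS) hmem
  · intro v hv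
    conv_lhs => rw [← piC_sum hgr D hv]
    rw [map_sum]
    refine Finset.sum_congr rfl fun m hm => ?_
    rw [aeval_on_graded hdeg p m (piC_mem hgr m v)]
    congr 1
    exact Lagrange.eval_interpolate_at_node q
      (fun a _ b _ hab => Int.cast_injective hab) hm


section LiePlumbing
variable [LieRingModule L V] [LieModule ℂ L V]
  {M : Type*} [AddCommGroup M] [Module ℂ M] [LieRingModule L M] [LieModule ℂ L M]
  {M' : Type*} [AddCommGroup M'] [Module ℂ M'] [LieRingModule L M'] [LieModule ℂ L M']

lemma isCompl_coe {U C : LieSubmodule ℂ L V} (hUC : IsCompl U C) :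
    IsCompl (U : Submodule ℂ V) (C : Submodule ℂ V) := by
  constructor
  · rw [disjoint_iff, ← LieSubmodule.inf_toSubmodule, hUC.inf_eq_bot,
      LieSubmodule.bot_toSubmodule]
  · rw [codisjoint_iff, ← LieSubmodule.sup_toSubmodule, hUC.sup_eq_top,
      LieSubmodule.top_toSubmodule]

/-- The equivariant projection onto a complemented Lie submodule, as an endomorphism. -/
noncomputable def eproj {U C : LieSubmodule ℂ L V} (hUC : IsCompl U C) : Module.End ℂ V :=
  (U : Submodule ℂ V).subtype ∘ₗ
    Submodule.projectionOnto (U : Submodule ℂ V) (C : Submodule ℂ V) (isCompl_coe hUC)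

lemma eproj_mem {U C : LieSubmodule ℂ L V} (hUC : IsCompl U C) (v : V) :
    eproj hUC v ∈ U :=
  (Submodule.linearProjOfIsCompl (U : Submodule ℂ V) (C : Submodule ℂ V)
    (isCompl_coe hUC) v).2

lemma eproj_left {U C : LieSubmodule ℂ L V} (hUC : IsCompl U C) {v : V} (hv : v ∈ U) :
    eproj hUC v = v :=
  congrArg Subtype.val
    (Submodule.linearProjOfIsCompl_apply_left (isCompl_coe hUC) ⟨v, hv⟩)

lemma eproj_right {U C : LieSubmodule ℂ L V} (hUC : IsCompl U C) {v : V} (hv : v ∈ C) :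
    eproj hUC v = 0 := by
  have := Submodule.projectionOnto_apply_of_mem_right (isCompl_coe hUC) hv
  simp only [eproj, LinearMap.comp_apply, this, Submodule.coe_zero, map_zero]

lemma eproj_lie {U C : LieSubmodule ℂ L V} (hUC : IsCompl U C) (x : L) (v : V) :
    eproj hUC ⁅x, v⁆ = ⁅x, eproj hUC v⁆ := by
  have hv : v ∈ (U : Submodule ℂ V) ⊔ (C : Submodule ℂ V) := by
    rw [(isCompl_coe hUC).sup_eq_top]; exact Submodule.mem_top
  obtain ⟨u, hu, c, hc, rfl⟩ := Submodule.mem_sup.1 hv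
  rw [lie_add, map_add, map_add, eproj_left hUC hu, eproj_right hUC hc,
    eproj_left hUC (U.lie_mem hu), eproj_right hUC (C.lie_mem hc), add_zero, add_zero]

/-- The equivariant projection as a morphism of Lie modules into the submodule. -/
noncomputable def projHom {U C : LieSubmodule ℂ L V} (hUC : IsCompl U C) :
    V →ₗ⁅ℂ,L⁆ U :=
  LieModuleHom.codRestrict U
    { toLinearMap := eproj hUC
      map_lie' := fun {x v} => eproj_lie hUC x v }
    (eproj_mem hUC)

lemma projHom_apply {U C : LieSubmodule ℂ L V} (hUC : IsCompl U C) (v : V) :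
    (projHom hUC v : V) = eproj hUC v := rfl

lemma projHom_apply_mem {U C : LieSubmodule ℂ L V} (hUC : IsCompl U C) {v : V}
    (hv : v ∈ U) : projHom hUC v = ⟨v, hv⟩ := by
  apply Subtype.ext
  rw [projHom_apply, eproj_left hUC hv]

/-- A bijective morphism of Lie modules is an equivalence. -/
noncomputable def lieEquivOfBijective (g : M →ₗ⁅ℂ,L⁆ M') (hg : Function.Bijective g) :
    M ≃ₗ⁅ℂ,L⁆ M' :=
  { toLieModuleHom := g
    invFun := (Equiv.ofBijective g hg).symm
    left_inv := (Equiv.ofBijective g hg).left_inv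
    right_inv := (Equiv.ofBijective g hg).right_inv }

lemma inj_of_ne_zero [IsSimpleOrder (LieSubmodule ℂ L M)] (f : M →ₗ⁅ℂ,L⁆ M')
    (hf : f ≠ 0) : Function.Injective f := by
  rw [← LieModuleHom.ker_eq_bot]
  rcases eq_bot_or_eq_top f.ker with h | h
  · exact h
  · exfalso
    apply hf
    ext m
    have : m ∈ f.ker := h ▸ LieSubmodule.mem_top m
    simpa using (LieModuleHom.mem_ker).1 this

/-- Composition of an equivariant endomorphism with a morphism of Lie modules. -/
def compEnd (a : Module.End ℂ V) (ha : ∀ (x : L) (v : V), a ⁅x, v⁆ = ⁅x, a v⁆)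
    (f : M →ₗ⁅ℂ,L⁆ V) : M →ₗ⁅ℂ,L⁆ V where
  toLinearMap := a ∘ₗ f.toLinearMap
  map_lie' := by
    intro x m
    show a (f ⁅x, m⁆) = ⁅x, a (f m)⁆
    rw [f.map_lie]
    exact ha x (f m)

@[simp] lemma compEnd_apply (a : Module.End ℂ V) (ha) (f : M →ₗ⁅ℂ,L⁆ V) (m : M) :
    compEnd (L := L) a ha f m = a (f m) := rfl

/-- restriction of an injective morphism to its range, as an equivalence -/
noncomputable def equivRange (f : M →ₗ⁅ℂ,L⁆ V) (hf : Function.Injective f) :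
    M ≃ₗ⁅ℂ,L⁆ f.range :=
  lieEquivOfBijective (f.codRestrict f.range fun m => (LieModuleHom.mem_range f (f m)).2 ⟨m, rfl⟩)
    ⟨fun a b hab => hf (congrArg Subtype.val hab), by
      rintro ⟨v, hv⟩
      obtain ⟨m, hm⟩ := (LieModuleHom.mem_range f v).1 hv
      exact ⟨m, Subtype.ext (by simpa using hm)⟩⟩

lemma equivRange_apply (f : M →ₗ⁅ℂ,L⁆ V) (hf : Function.Injective f) (x : M) :
    ((equivRange f hf x : f.range) : V) = f x := rfl

lemma exists_comp_ne_zero (hgr : DirectSum.IsInternal Vgr) (f : M →ₗ⁅ℂ,L⁆ V)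
    (hf : f ≠ 0) : ∃ (x : M) (n : ℤ), piC hgr n (f x) ≠ 0 := by
  by_contra hc
  push_neg at hc
  apply hf
  ext x
  have h0 : f x = 0 := by
    have := piC_sum hgr ∅ (fun k _ => hc x k)
    simpa using this.symm
  simpa using h0

lemma findim_of_ne_zero (hgr : DirectSum.IsInternal Vgr)
    (hfin : ∀ n : ℤ, FiniteDimensional ℂ ↥(⨆ m ≤ n, Vgr m))
    (hLinv : ∀ (n : ℤ) (x : L), ∀ v ∈ Vgr n, ⁅x, v⁆ ∈ Vgr n)
    [IsSimpleOrder (LieSubmodule ℂ L M)]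
    (f : M →ₗ⁅ℂ,L⁆ V) (hf : f ≠ 0) : FiniteDimensional ℂ M := by
  obtain ⟨x0, n, hx0⟩ := exists_comp_ne_zero hgr f hf
  set g := compEnd (piC hgr n) (piC_lie hgr hLinv n) f with hgdef
  have hg0 : g ≠ 0 := by
    intro h0
    apply hx0
    have : g x0 = 0 := by rw [h0]; rfl
    simpa [hgdef] using this
  have hginj : Function.Injective g := inj_of_ne_zero g hg0
  haveI : FiniteDimensional ℂ ↥(⨆ m ≤ n, Vgr m) := hfin n
  haveI : FiniteDimensional ℂ ↥(Vgr n) :=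
    Submodule.finiteDimensional_of_le (le_iSup₂ (f := fun m (_ : m ≤ n) => Vgr m) n le_rfl)
  exact FiniteDimensional.of_injective
    (LinearMap.codRestrict (Vgr n) (g : M →ₗ[ℂ] V) fun m => piC_mem hgr n (f m))
    fun a b hab => hginj (congrArg Subtype.val hab)

lemma le_trunc_of_covering (hgr : DirectSum.IsInternal Vgr) {X : Submodule ℂ V}
    {D : Finset ℤ} (hD : ∀ v ∈ X, ∀ k ∉ D, piC hgr k v = 0) {N : ℤ}
    (hN : ∀ m ∈ D, m ≤ N) : X ≤ ⨆ m ≤ N, Vgr m := by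
  intro v hv
  rw [← piC_sum hgr D (hD v hv)]
  exact Submodule.sum_mem _ fun m hm =>
    (le_iSup₂ (f := fun m (_ : m ≤ N) => Vgr m) m (hN m hm)) (piC_mem hgr m v)

lemma master (hgr : DirectSum.IsInternal Vgr)
    {S : Set (Module.End ℂ V)} {h : Module.End ℂ V}
    (hhS : h ∈ S) (hdeg : ∀ n : ℤ, ∀ v ∈ Vgr n, h v = (n : ℂ) • v)
    (hcompr : ∀ (n : ℤ) (T : ↥(⨆ m ≤ n, Vgr m) →ₗ[ℂ] ↥(⨆ m ≤ n, Vgr m)),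
      (∀ (x : L) (v w : ↥(⨆ m ≤ n, Vgr m)),
        (w : V) = ⁅x, (v : V)⁆ → (T w : V) = ⁅x, ((T v : V))⁆) →
      ∃ a ∈ Algebra.adjoin ℂ S, ∀ v : ↥(⨆ m ≤ n, Vgr m),
        a (v : V) - (T v : V) ∈ ⨆ m > n, Vgr m)
    [FiniteDimensional ℂ M] [FiniteDimensional ℂ M']
    (f : M →ₗ⁅ℂ,L⁆ V) (f' : M' →ₗ⁅ℂ,L⁆ V) (Ψ : V →ₗ⁅ℂ,L⁆ V) (N : ℤ)
    (hΨr : ∀ v : V, Ψ v ∈ ⨆ m ≤ N, Vgr m)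
    (hfr : ∀ x : M, f x ∈ ⨆ m ≤ N, Vgr m)
    (hfr' : ∀ x' : M', f' x' ∈ ⨆ m ≤ N, Vgr m) :
    ∃ b ∈ Algebra.adjoin ℂ S, (∀ x : M, b (f x) = Ψ (f x)) ∧
      (∀ x' : M', b (f' x') = Ψ (f' x')) := by
  classical
  set T : ↥(⨆ m ≤ N, Vgr m) →ₗ[ℂ] ↥(⨆ m ≤ N, Vgr m) :=
    (Ψ : V →ₗ[ℂ] V).restrict (fun v _ => hΨr v) with hTdef
  have hTeq : ∀ (x : L) (v w : ↥(⨆ m ≤ N, Vgr m)), (w : V) = ⁅x, (v : V)⁆ →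
      (T w : V) = ⁅x, (T v : V)⁆ := by
    intro x v w hw
    have h1 : (T w : V) = Ψ (w : V) := rfl
    have h2 : (T v : V) = Ψ (v : V) := rfl
    rw [h1, h2, hw, Ψ.map_lie]
  obtain ⟨a, haA, ha⟩ := hcompr N T hTeq
  set Y := (LinearMap.range (f : M →ₗ[ℂ] V) ⊔ LinearMap.range (f' : M' →ₗ[ℂ] V) :
    Submodule ℂ V) with hYdef
  set Z := (Y ⊔ Y.map a : Submodule ℂ V) with hZdef
  obtain ⟨D, hD⟩ := exists_covering hgr Z
  obtain ⟨c, hcA, hc⟩ := filter_op hgr hhS hdeg D (fun m => if m ≤ N then 1 else 0)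
  have key : ∀ v : V, v ∈ Y → v ∈ (⨆ m ≤ N, Vgr m : Submodule ℂ V) → (c * a) v = Ψ v := by
    intro v hvY hvW
    have havZ : a v ∈ Z := Submodule.mem_sup_right (Submodule.mem_map_of_mem hvY)
    have herr : a v - Ψ v ∈ ⨆ m > N, Vgr m := by
      have := ha ⟨v, hvW⟩
      have h1 : (T ⟨v, hvW⟩ : V) = Ψ v := rfl
      rwa [h1] at this
    rw [Module.End.mul_apply, hc (a v) (fun k hk => hD (a v) havZ k hk)]
    have hterm : ∀ m ∈ D,
        (if m ≤ N then (1 : ℂ) else 0) • piC hgr m (a v) = piC hgr m (Ψ v) := by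
      intro m hm
      by_cases hmN : m ≤ N
      · rw [if_pos hmN, one_smul]
        have h1 : piC hgr m (a v) = piC hgr m (Ψ v) + piC hgr m (a v - Ψ v) := by
          rw [← map_add]
          congr 1
          abel
        rw [h1, piC_eq_zero_of_mem hgr (s := {m : ℤ | N < m}) herr (by
          simpa using hmN), add_zero]
      · rw [if_neg hmN, zero_smul]
        exact (piC_eq_zero_of_mem hgr (s := {m : ℤ | m ≤ N}) (hΨr v) hmN).symm
    rw [Finset.sum_congr rfl hterm]
    refine piC_sum hgr D fun k hk => ?_
    by_cases hkN : k ≤ N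
    · have h1 : piC hgr k (Ψ v) = piC hgr k (a v) - piC hgr k (a v - Ψ v) := by
        rw [← map_sub]
        congr 1
        abel
      rw [h1, hD (a v) havZ k hk,
        piC_eq_zero_of_mem hgr (s := {m : ℤ | N < m}) herr (by simpa using hkN), sub_zero]
    · exact piC_eq_zero_of_mem hgr (s := {m : ℤ | m ≤ N}) (hΨr v) hkN
  refine ⟨c * a, Subalgebra.mul_mem _ hcA haA, fun x => ?_, fun x' => ?_⟩
  · exact key (f x) (Submodule.mem_sup_left (LinearMap.mem_range.2 ⟨x, rfl⟩)) (hfr x)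
  · exact key (f' x') (Submodule.mem_sup_right (LinearMap.mem_range.2 ⟨x', rfl⟩)) (hfr' x')


end LiePlumbing
end Aux


/-- Lie algebra version of the duality theorem.  Let `𝔤` (here `L`) be
a complex Lie algebra and `V = ⊕_{n ∈ ℤ} V_n` a ℤ-graded complex vector space with
finite-dimensional truncations `V_{≤n}`, on which `𝔤` acts by operators preserving each
`V_n`, with `V` a semisimple `𝔤`-module (it is the sum of its irreducible, i.e. atomic,
Lie submodules).  `S` is a set of `𝔤`-equivariant homogeneous endomorphisms of `V`
generating the unital subalgebra `A = Algebra.adjoin ℂ S`; `S` contains a degree-`0`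
operator acting on `V_n` as multiplication by `n`, and every `𝔤`-equivariant
endomorphism of `V_{≤n}` is the compression of some `a ∈ A`.  Then, for each irreducible
`𝔤`-module `M`, the multiplicity space `Hom_𝔤(M, V)` (with `A`-action `a • f = a ∘ f`)
is zero or simple — expressed as: any nonzero `f` generates everything under `A` — and
for non-isomorphic irreducible `M`, `M'` with nonzero multiplicity spaces, the
multiplicity spaces are not isomorphic as `A`-modules (no ℂ-linear equivalence commutes
with the `A`-action). -/
theorem lie_multiplicity_space_simple_and_distinct
    {L : Type*} [LieRing L] [LieAlgebra ℂ L]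
    {V : Type*} [AddCommGroup V] [Module ℂ V] [LieRingModule L V] [LieModule ℂ L V]
    (hss : sSup {N : LieSubmodule ℂ L V | IsAtom N} = ⊤)
    (Vgr : ℤ → Submodule ℂ V) (hgr : DirectSum.IsInternal Vgr)
    (hfin : ∀ n : ℤ, FiniteDimensional ℂ ↥(⨆ m ≤ n, Vgr m))
    (hLinv : ∀ (n : ℤ) (x : L), ∀ v ∈ Vgr n, ⁅x, v⁆ ∈ Vgr n)
    (S : Set (Module.End ℂ V))
    (hSequiv : ∀ a ∈ S, ∀ (x : L) (v : V), a ⁅x, v⁆ = ⁅x, a v⁆)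
    (hShomog : ∀ a ∈ S, ∃ d : ℤ, ∀ m : ℤ, ∀ v ∈ Vgr m, a v ∈ Vgr (m + d))
    (hdeg : ∃ h ∈ S, ∀ n : ℤ, ∀ v ∈ Vgr n, h v = (n : ℂ) • v)
    (hcompr : ∀ (n : ℤ) (T : ↥(⨆ m ≤ n, Vgr m) →ₗ[ℂ] ↥(⨆ m ≤ n, Vgr m)),
      (∀ (x : L) (v w : ↥(⨆ m ≤ n, Vgr m)),
        (w : V) = ⁅x, (v : V)⁆ → (T w : V) = ⁅x, ((T v : V))⁆) →
      ∃ a ∈ Algebra.adjoin ℂ S, ∀ v : ↥(⨆ m ≤ n, Vgr m),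
        a (v : V) - (T v : V) ∈ ⨆ m > n, Vgr m)
    {M M' : Type*}
    [AddCommGroup M] [Module ℂ M] [LieRingModule L M] [LieModule ℂ L M]
    [AddCommGroup M'] [Module ℂ M'] [LieRingModule L M'] [LieModule ℂ L M']
    [IsSimpleOrder (LieSubmodule ℂ L M)] [IsSimpleOrder (LieSubmodule ℂ L M')] :
    (∀ f g : M →ₗ⁅ℂ,L⁆ V, f ≠ 0 →
        ∃ a ∈ Algebra.adjoin ℂ S, ∀ x : M, a (f x) = g x) ∧
      (IsEmpty (M ≃ₗ⁅ℂ,L⁆ M') →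
        (∃ f : M →ₗ⁅ℂ,L⁆ V, f ≠ 0) → (∃ f' : M' →ₗ⁅ℂ,L⁆ V, f' ≠ 0) →
        ¬ ∃ Φ : (M →ₗ⁅ℂ,L⁆ V) ≃ₗ[ℂ] (M' →ₗ⁅ℂ,L⁆ V),
          ∀ a ∈ Algebra.adjoin ℂ S, ∀ f f' : M →ₗ⁅ℂ,L⁆ V,
            (∀ x : M, f' x = a (f x)) → ∀ x' : M', Φ f' x' = a (Φ f x')) := by
  classical
  obtain ⟨h, hhS, hdeg'⟩ := hdeg
  haveI : ComplementedLattice (LieSubmodule ℂ L V) :=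
    complementedLattice_of_sSup_atoms_eq_top hss
  constructor
  · -- Part 1 : simplicity of the multiplicity space
    intro f g hf
    haveI : FiniteDimensional ℂ M := findim_of_ne_zero hgr hfin hLinv f hf
    obtain ⟨x0, n, hx0⟩ := exists_comp_ne_zero hgr f hf
    set f1 : M →ₗ⁅ℂ,L⁆ V := compEnd (piC hgr n) (piC_lie hgr hLinv n) f with hf1def
    have hf1 : f1 ≠ 0 := by
      intro h0
      apply hx0
      have : f1 x0 = 0 := by rw [h0]; rfl
      simpa [hf1def] using this
    have hf1inj : Function.Injective f1 := inj_of_ne_zero f1 hf1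
    set e := equivRange f1 hf1inj with he
    obtain ⟨C, hUC⟩ := exists_isCompl f1.range
    set Ψ : V →ₗ⁅ℂ,L⁆ V := g.comp (e.symm.toLieModuleHom.comp (projHom hUC)) with hΨdef
    have hΨf1 : ∀ x : M, Ψ (f1 x) = g x := by
      intro x
      have hmem : f1 x ∈ f1.range := (LieModuleHom.mem_range f1 (f1 x)).2 ⟨x, rfl⟩
      have h1 : Ψ (f1 x) = g (e.symm (projHom hUC (f1 x))) := rfl
      rw [h1, projHom_apply_mem hUC hmem]
      have h2 : (⟨f1 x, hmem⟩ : f1.range) = e x := rfl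
      rw [h2, e.symm_apply_apply, ]
    -- choose a covering of the relevant ranges
    set X1 := (LinearMap.range (f : M →ₗ[ℂ] V) ⊔ LinearMap.range (g : M →ₗ[ℂ] V) :
      Submodule ℂ V) with hX1def
    obtain ⟨D1, hD1⟩ := exists_covering hgr X1
    set N := (insert n D1).max' (Finset.insert_nonempty n D1) with hNdef
    have hND : ∀ m ∈ D1, m ≤ N := fun m hm =>
      Finset.le_max' _ m (Finset.mem_insert_of_mem hm)
    have hnN : n ≤ N := Finset.le_max' _ n (Finset.mem_insert_self n D1)
    have hX1W : X1 ≤ ⨆ m ≤ N, Vgr m := le_trunc_of_covering hgr hD1 hND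
    have hΨr : ∀ v : V, Ψ v ∈ ⨆ m ≤ N, Vgr m := by
      intro v
      refine hX1W (Submodule.mem_sup_right ?_)
      exact LinearMap.mem_range.2 ⟨e.symm (projHom hUC v), rfl⟩
    have hf1r : ∀ x : M, f1 x ∈ ⨆ m ≤ N, Vgr m := fun x =>
      (le_iSup₂ (f := fun m (_ : m ≤ N) => Vgr m) n hnN) (piC_mem hgr n (f x))
    obtain ⟨b, hbA, hb1, -⟩ :=
      master hgr hhS hdeg' hcompr f1 f1 Ψ N hΨr hf1r hf1r
    -- the projection onto the degree-`n` component of `f`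
    obtain ⟨a1, ha1A, ha1⟩ := filter_op hgr hhS hdeg' D1 (fun m => if m = n then 1 else 0)
    have hnD1 : n ∈ D1 := by
      by_contra hn
      exact hx0 (hD1 (f x0) (Submodule.mem_sup_left (LinearMap.mem_range.2 ⟨x0, rfl⟩)) n hn)
    have ha1f : ∀ x : M, a1 (f x) = f1 x := by
      intro x
      rw [ha1 (f x) (fun k hk =>
        hD1 (f x) (Submodule.mem_sup_left (LinearMap.mem_range.2 ⟨x, rfl⟩)) k hk)]
      have hterm : ∀ m ∈ D1, (if m = n then (1 : ℂ) else 0) • piC hgr m (f x) =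
          if m = n then piC hgr m (f x) else 0 := by
        intro m _
        by_cases hmn : m = n
        · rw [if_pos hmn, if_pos hmn, one_smul]
        · rw [if_neg hmn, if_neg hmn, zero_smul]
      rw [Finset.sum_congr rfl hterm, Finset.sum_ite_eq' D1 n (fun m => piC hgr m (f x)),
        if_pos hnD1]
      rfl
    refine ⟨b * a1, Subalgebra.mul_mem _ hbA ha1A, fun x => ?_⟩
    rw [Module.End.mul_apply, ha1f x, hb1 x, hΨf1 x]
  · -- Part 2 : multiplicity spaces of distinct simple modules are not isomorphic
    rintro hMM' ⟨f, hf⟩ - ⟨Φ, hΦ⟩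
    haveI : FiniteDimensional ℂ M := findim_of_ne_zero hgr hfin hLinv f hf
    set f' : M' →ₗ⁅ℂ,L⁆ V := Φ f with hf'def
    have hf' : f' ≠ 0 := by
      intro h0
      exact hf (Φ.map_eq_zero_iff.1 h0)
    haveI : FiniteDimensional ℂ M' := findim_of_ne_zero hgr hfin hLinv f' hf'
    have hfinj : Function.Injective f := inj_of_ne_zero f hf
    set e := equivRange f hfinj with he
    obtain ⟨C, hUC⟩ := exists_isCompl f.range
    set lam : M' →ₗ⁅ℂ,L⁆ M :=
      e.symm.toLieModuleHom.comp ((projHom hUC).comp f') with hlamdef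
    have hlam : lam = 0 := by
      by_contra hne
      have hinj : Function.Injective lam := inj_of_ne_zero lam hne
      have hsur : Function.Surjective lam := by
        rcases eq_bot_or_eq_top lam.range with hr | hr
        · exfalso
          apply hne
          ext x'
          have hmem : lam x' ∈ lam.range := (LieModuleHom.mem_range lam (lam x')).2 ⟨x', rfl⟩
          rw [hr] at hmem
          simpa using (LieSubmodule.mem_bot (lam x')).1 hmem
        · intro y
          exact (LieModuleHom.mem_range lam y).1 (hr ▸ LieSubmodule.mem_top y)
      exact hMM'.elim (lieEquivOfBijective lam ⟨hinj, hsur⟩).symm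
    have hpr0 : ∀ x' : M', projHom hUC (f' x') = 0 := by
      intro x'
      have h0 : lam x' = 0 := by rw [hlam]; rfl
      have h1 : e.symm (projHom hUC (f' x')) = 0 := h0
      have h2 : projHom hUC (f' x') = e 0 := by
        rw [← h1, e.apply_symm_apply]
      have h3 : e 0 = (0 : f.range) := by
        rw [← LieModuleEquiv.coe_toLinearEquiv]
        exact map_zero _
      rw [h2, h3]
    set Ψ : V →ₗ⁅ℂ,L⁆ V := f.range.incl.comp (projHom hUC) with hΨdef
    have hΨf : ∀ x : M, Ψ (f x) = f x := by
      intro x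
      have hmem : f x ∈ f.range := (LieModuleHom.mem_range f (f x)).2 ⟨x, rfl⟩
      have h1 : Ψ (f x) = ((projHom hUC (f x) : f.range) : V) := rfl
      rw [h1, projHom_apply_mem hUC hmem]
    have hΨf' : ∀ x' : M', Ψ (f' x') = 0 := by
      intro x'
      have h1 : Ψ (f' x') = ((projHom hUC (f' x') : f.range) : V) := rfl
      rw [h1, hpr0 x', LieSubmodule.coe_zero]
    set X1 := (LinearMap.range (f : M →ₗ[ℂ] V) ⊔ LinearMap.range (f' : M' →ₗ[ℂ] V) :
      Submodule ℂ V) with hX1def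
    obtain ⟨D1, hD1⟩ := exists_covering hgr X1
    set N := (insert 0 D1).max' (Finset.insert_nonempty 0 D1) with hNdef
    have hND : ∀ m ∈ D1, m ≤ N := fun m hm =>
      Finset.le_max' _ m (Finset.mem_insert_of_mem hm)
    have hX1W : X1 ≤ ⨆ m ≤ N, Vgr m := le_trunc_of_covering hgr hD1 hND
    have hfr : ∀ x : M, f x ∈ ⨆ m ≤ N, Vgr m := fun x =>
      hX1W (Submodule.mem_sup_left (LinearMap.mem_range.2 ⟨x, rfl⟩))
    have hfr' : ∀ x' : M', f' x' ∈ ⨆ m ≤ N, Vgr m := fun x' =>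
      hX1W (Submodule.mem_sup_right (LinearMap.mem_range.2 ⟨x', rfl⟩))
    have hΨr : ∀ v : V, Ψ v ∈ ⨆ m ≤ N, Vgr m := by
      intro v
      have hmem : ((projHom hUC v : f.range) : V) ∈ f.range := (projHom hUC v).2
      obtain ⟨x, hx⟩ := (LieModuleHom.mem_range f _).1 hmem
      have h1 : Ψ v = ((projHom hUC v : f.range) : V) := rfl
      rw [h1, ← hx]
      exact hfr x
    obtain ⟨b, hbA, hb1, hb2⟩ := master hgr hhS hdeg' hcompr f f' Ψ N hΨr hfr hfr'
    set bf : M →ₗ⁅ℂ,L⁆ V := compEnd b (adjoin_equiv hSequiv b hbA) f with hbfdef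
    have hbf : bf = f := by
      ext x
      show b (f x) = f x
      rw [hb1 x, hΨf x]
    have hcomm := hΦ b hbA f bf (fun x => rfl)
    have hzero : ∀ x' : M', f' x' = 0 := by
      intro x'
      have h1 : Φ bf x' = b (Φ f x') := hcomm x'
      rw [hbf] at h1
      calc f' x' = Φ f x' := rfl
        _ = b (Φ f x') := h1
        _ = b (f' x') := rfl
        _ = Ψ (f' x') := hb2 x'
        _ = 0 := hΨf' x'
    exact hf' (by ext x'; simpa using hzero x')
end

section
/- Let G be a group, H a subgroup of G, A a ℂ-algebra, and V a complex vector space carrying a linear G-action and an A-module structure that commute with each other. Suppose V admits two direct sum decompositions: V ≅ ⊕_{λ∈I} W_λ ⊗ V_λ as ℂ[G]⊗A-modules (G acting on the first tensor factors, A on the second), where the W_λ are pairwise non-isomorphic finite-dimensional irreducible ℂ[G]-modules and the V_λ are pairwise non-isomorphic simple A-modules; and V ≅ ⊕_{μ∈J} X_μ ⊗ U_μ as ℂ[H]⊗A-modules (H acting on the first tensor factors, A on the second), where the X_μ are pairwise non-isomorphic finite-dimensional irreducible ℂ[H]-modules and the U_μ are A-modules. Suppose further that, as ℂ[H]-modules,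 W_λ ≅ ⊕_{μ∈J} X_μ^{⊕ m_{λμ}} with finite multiplicities m_{λμ}, and, as A-modules, U_μ ≅ ⊕_{λ∈I} V_λ^{⊕ n_{μλ}} with finite multiplicities n_{μλ}. Then m_{λμ} = n_{μλ} for all λ ∈ I and μ ∈ J. -/
open scoped TensorProduct DirectSum

section aux
variable {H : Type*} [Group H]

private lemma aux_exists_dual {X : Type*} [AddCommGroup X] [Module ℂ X] {x : X} (hx : x ≠ 0) :
    ∃ φ : X →ₗ[ℂ] ℂ, φ x = 1 := by
  obtain ⟨g, hg⟩ := (LinearMap.toSpanSingleton ℂ X x).exists_leftInverse_of_injective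
    (LinearMap.ker_toSpanSingleton ℂ hx)
  refine ⟨g, ?_⟩
  have := LinearMap.congr_fun hg 1
  simpa [LinearMap.toSpanSingleton_apply] using this

private lemma aux_tmul_right_eq_zero {X U : Type*} [AddCommGroup X] [Module ℂ X]
    [AddCommGroup U] [Module ℂ U] {x : X} (hx : x ≠ 0) {u : U} (h : x ⊗ₜ[ℂ] u = 0) : u = 0 := by
  obtain ⟨φ, hφ⟩ := aux_exists_dual hx
  have := congrArg (fun z => TensorProduct.lid ℂ U (TensorProduct.map φ LinearMap.id z)) h
  simpa [hφ] using this

/-- Schur: an equivariant endomorphism of a finite-dimensional irreducible rep is scalar. -/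
private lemma aux_schur_scalar {X : Type*} [AddCommGroup X] [Module ℂ X] [FiniteDimensional ℂ X]
    (τ : Representation ℂ H X) (hnt : Nontrivial X)
    (hirr : ∀ p : Submodule ℂ X, (∀ h : H, ∀ x ∈ p, τ h x ∈ p) → p = ⊥ ∨ p = ⊤)
    (f : X →ₗ[ℂ] X) (hf : ∀ (h : H) (x : X), f (τ h x) = τ h (f x)) :
    ∃ c : ℂ, ∀ x, f x = c • x := by
  haveI := hnt
  obtain ⟨c, hc⟩ := Module.End.exists_eigenvalue (f : Module.End ℂ X)
  obtain ⟨v, hv⟩ := hc.exists_hasEigenvector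
  refine ⟨c, ?_⟩
  set p : Submodule ℂ X := LinearMap.ker (f - c • LinearMap.id) with hp
  have hmem : ∀ x, x ∈ p ↔ f x = c • x := by
    intro x
    simp [hp, LinearMap.mem_ker, sub_eq_zero]
  have hinv : ∀ h : H, ∀ x ∈ p, τ h x ∈ p := by
    intro h x hxp
    rw [hmem] at hxp ⊢
    rw [hf, hxp, map_smul]
  have hpbot : p ≠ ⊥ := by
    intro hbot
    have hvmem : v ∈ p := (hmem v).2 hv.apply_eq_smul
    rw [hbot, Submodule.mem_bot] at hvmem
    exact hv.2 hvmem
  have := (hirr p hinv).resolve_left hpbot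
  intro x
  exact (hmem x).1 (this ▸ Submodule.mem_top)

/-- Schur: an equivariant map between non-isomorphic irreducibles is zero. -/
private lemma aux_schur_zero {X X' : Type*} [AddCommGroup X] [Module ℂ X]
    [AddCommGroup X'] [Module ℂ X']
    (τ : Representation ℂ H X) (τ' : Representation ℂ H X')
    (hnt : Nontrivial X)
    (hirr : ∀ p : Submodule ℂ X, (∀ h : H, ∀ x ∈ p, τ h x ∈ p) → p = ⊥ ∨ p = ⊤)
    (hirr' : ∀ p : Submodule ℂ X', (∀ h : H, ∀ x ∈ p, τ' h x ∈ p) → p = ⊥ ∨ p = ⊤)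
    (hno : ¬ ∃ e : X ≃ₗ[ℂ] X', ∀ (h : H) (x : X), e (τ h x) = τ' h (e x))
    (f : X →ₗ[ℂ] X') (hf : ∀ (h : H) (x : X), f (τ h x) = τ' h (f x)) :
    f = 0 := by
  have hker : ∀ h : H, ∀ x ∈ LinearMap.ker f, τ h x ∈ LinearMap.ker f := by
    intro h x hx
    rw [LinearMap.mem_ker] at hx ⊢
    rw [hf, hx, map_zero]
  rcases hirr _ hker with hk | hk
  · -- f injective; show surjective, contradiction
    have hrange : ∀ h : H, ∀ y ∈ LinearMap.range f, τ' h y ∈ LinearMap.range f := by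
      rintro h _ ⟨x, rfl⟩
      exact ⟨τ h x, hf h x⟩
    rcases hirr' _ hrange with hr | hr
    · -- range = ⊥ means f = 0
      ext x
      have : f x ∈ LinearMap.range f := ⟨x, rfl⟩
      rw [hr, Submodule.mem_bot] at this
      simp [this]
    · exfalso
      have hbij : Function.Bijective f :=
        ⟨LinearMap.ker_eq_bot.1 hk, LinearMap.range_eq_top.1 hr⟩
      exact hno ⟨LinearEquiv.ofBijective f hbij, fun h x => hf h x⟩
  · ext x
    have : x ∈ LinearMap.ker f := hk ▸ Submodule.mem_top
    simpa using this

end aux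

section core
variable {H : Type*} [Group H]

/-- An `H`-equivariant map `X → X ⊗ U` (acting trivially on `U`) is `x ↦ x ⊗ u` for a unique `u`. -/
private lemma aux_hom_into_tensor_self {X U : Type*} [AddCommGroup X] [Module ℂ X]
    [FiniteDimensional ℂ X] [AddCommGroup U] [Module ℂ U]
    (τ : Representation ℂ H X) (hnt : Nontrivial X)
    (hirr : ∀ p : Submodule ℂ X, (∀ h : H, ∀ x ∈ p, τ h x ∈ p) → p = ⊥ ∨ p = ⊤)
    (F : X →ₗ[ℂ] X ⊗[ℂ] U)
    (hF : ∀ (h : H) (x : X), F (τ h x) = TensorProduct.map (τ h) LinearMap.id (F x)) :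
    ∃! u : U, ∀ x, F x = x ⊗ₜ[ℂ] u := by
  classical
  set b := Module.Basis.ofVectorSpace ℂ U with hb
  set ψ : X ⊗[ℂ] U ≃ₗ[ℂ] (Module.Basis.ofVectorSpaceIndex ℂ U →₀ X) :=
    (TensorProduct.congr (LinearEquiv.refl ℂ X) b.repr).trans
      (TensorProduct.finsuppScalarRight ℂ ℂ X _) with hψdef
  have hψ : ∀ (x : X) (u : U) k, ψ (x ⊗ₜ[ℂ] u) k = b.repr u k • x := by
    intro x u k
    simp [hψdef, TensorProduct.finsuppScalarRight_apply_tmul_apply]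
  have hψeq : ∀ (h : H) (z : X ⊗[ℂ] U) k,
      ψ (TensorProduct.map (τ h) LinearMap.id z) k = τ h (ψ z k) := by
    intro h z k
    induction z using TensorProduct.induction_on with
    | zero => simp
    | tmul x u => simp [hψ, map_smul]
    | add z1 z2 h1 h2 => simp [map_add, Finsupp.add_apply, h1, h2]
  have hc : ∀ k, ∃ c : ℂ, ∀ x, ψ (F x) k = c • x := by
    intro k
    refine aux_schur_scalar τ hnt hirr
      ((Finsupp.lapply k) ∘ₗ (ψ : X ⊗[ℂ] U →ₗ[ℂ] _) ∘ₗ F) ?_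
    intro h x
    simp only [LinearMap.comp_apply, LinearMap.coe_coe, Finsupp.lapply_apply]
    rw [hF]
    exact hψeq h (F x) k
  choose c hcspec using hc
  obtain ⟨x0, hx0⟩ := exists_ne (0 : X)
  have hsupp : ∀ k, c k ≠ 0 → k ∈ (ψ (F x0)).support := by
    intro k hk
    rw [Finsupp.mem_support_iff, hcspec]
    exact smul_ne_zero hk hx0
  set cf : Module.Basis.ofVectorSpaceIndex ℂ U →₀ ℂ := Finsupp.onFinset _ c hsupp with hcf
  refine ⟨b.repr.symm cf, ?_, ?_⟩
  · intro x
    apply ψ.injective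
    ext k
    rw [hψ, hcspec]
    simp [hcf, Finsupp.onFinset_apply]
  · intro u' hu'
    have h0 : x0 ⊗ₜ[ℂ] (u' - b.repr.symm cf) = 0 := by
      rw [TensorProduct.tmul_sub]
      rw [sub_eq_zero]
      rw [← hu' x0]
      apply ψ.injective
      ext k
      rw [hψ, hcspec]
      simp [hcf, Finsupp.onFinset_apply]
    have := aux_tmul_right_eq_zero hx0 h0
    rwa [sub_eq_zero] at this

/-- An `H`-equivariant map `X → X' ⊗ U` with `X, X'` non-isomorphic irreducibles is zero. -/
private lemma aux_hom_into_tensor_ne {X X' U : Type*} [AddCommGroup X] [Module ℂ X]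
    [AddCommGroup X'] [Module ℂ X'] [AddCommGroup U] [Module ℂ U]
    (τ : Representation ℂ H X) (τ' : Representation ℂ H X')
    (hnt : Nontrivial X)
    (hirr : ∀ p : Submodule ℂ X, (∀ h : H, ∀ x ∈ p, τ h x ∈ p) → p = ⊥ ∨ p = ⊤)
    (hirr' : ∀ p : Submodule ℂ X', (∀ h : H, ∀ x ∈ p, τ' h x ∈ p) → p = ⊥ ∨ p = ⊤)
    (hno : ¬ ∃ e : X ≃ₗ[ℂ] X', ∀ (h : H) (x : X), e (τ h x) = τ' h (e x))
    (F : X →ₗ[ℂ] X' ⊗[ℂ] U)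
    (hF : ∀ (h : H) (x : X), F (τ h x) = TensorProduct.map (τ' h) LinearMap.id (F x)) :
    F = 0 := by
  classical
  set b := Module.Basis.ofVectorSpace ℂ U with hb
  set ψ : X' ⊗[ℂ] U ≃ₗ[ℂ] (Module.Basis.ofVectorSpaceIndex ℂ U →₀ X') :=
    (TensorProduct.congr (LinearEquiv.refl ℂ X') b.repr).trans
      (TensorProduct.finsuppScalarRight ℂ ℂ X' _) with hψdef
  have hψeq : ∀ (h : H) (z : X' ⊗[ℂ] U) k,
      ψ (TensorProduct.map (τ' h) LinearMap.id z) k = τ' h (ψ z k) := by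
    intro h z k
    induction z using TensorProduct.induction_on with
    | zero => simp
    | tmul x u => simp [hψdef, TensorProduct.finsuppScalarRight_apply_tmul_apply, map_smul]
    | add z1 z2 h1 h2 => simp [map_add, Finsupp.add_apply, h1, h2]
  have hzero : ∀ k, (Finsupp.lapply k : (Module.Basis.ofVectorSpaceIndex ℂ U →₀ X') →ₗ[ℂ] X') ∘ₗ (ψ : X' ⊗[ℂ] U →ₗ[ℂ] _) ∘ₗ F = 0 := by
    intro k
    refine aux_schur_zero τ τ' hnt hirr hirr' hno _ ?_
    intro h x
    simp only [LinearMap.comp_apply, LinearMap.coe_coe, Finsupp.lapply_apply]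
    rw [hF]
    exact hψeq h (F x) k
  ext x
  apply ψ.injective
  ext k
  have := LinearMap.congr_fun (hzero k) x
  simpa using this

end core

section branch
variable {H : Type*} [Group H]

/-- Every `H`-equivariant map `X j0 → W ⊗ Y`, where `W ≅ ⨁ j, (X j)^{k j}` over `H`,
is of the form `x ↦ ∑ t, w_t x ⊗ v t` for a unique tuple `v`. -/
private lemma aux_branch {J : Type*} [DecidableEq J]
    (X : J → Type*) [∀ j, AddCommGroup (X j)] [∀ j, Module ℂ (X j)]
    [∀ j, FiniteDimensional ℂ (X j)]
    (τ : ∀ j, Representation ℂ H (X j))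
    (hXirr : ∀ j, Nontrivial (X j) ∧
      ∀ p : Submodule ℂ (X j), (∀ h : H, ∀ x ∈ p, τ j h x ∈ p) → p = ⊥ ∨ p = ⊤)
    (hXdist : ∀ j j', j ≠ j' →
      ¬ ∃ e' : X j ≃ₗ[ℂ] X j', ∀ (h : H) (x : X j), e' (τ j h x) = τ j' h (e' x))
    {W : Type*} [AddCommGroup W] [Module ℂ W] (σ : Representation ℂ H W)
    (k : J → ℕ) (bW : W ≃ₗ[ℂ] ⨁ j, (Fin (k j) → X j))
    (hbW : ∀ (h : H) (w : W) (j : J) (t : Fin (k j)), bW (σ h w) j t = τ j h (bW w j t))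
    {Y : Type*} [AddCommGroup Y] [Module ℂ Y]
    (j0 : J)
    (F : X j0 →ₗ[ℂ] W ⊗[ℂ] Y)
    (hF : ∀ (h : H) (x : X j0), F (τ j0 h x) = TensorProduct.map (σ h) LinearMap.id (F x)) :
    ∃! v : Fin (k j0) → Y, ∀ x, F x
      = ∑ t, (bW.symm (DirectSum.lof ℂ J (fun j => Fin (k j) → X j) j0 (Pi.single t x)))
          ⊗ₜ[ℂ] v t := by
  classical
  set M : J → Type _ := fun j => Fin (k j) → X j with hM
  set Di : W ⊗[ℂ] Y ≃ₗ[ℂ] ⨁ j, (M j ⊗[ℂ] Y) :=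
    (TensorProduct.congr bW (LinearEquiv.refl ℂ Y)).trans
      (TensorProduct.directSumLeft ℂ ℂ M Y) with hDidef
  -- componentwise description of `directSumLeft`
  have hDS : ∀ (z : ⨁ j, M j) (y : Y) (j : J),
      TensorProduct.directSumLeft ℂ ℂ M Y (z ⊗ₜ[ℂ] y) j = (z j) ⊗ₜ[ℂ] y := by
    intro z y j
    induction z using DirectSum.induction_on with
    | zero => simp
    | of j' x =>
      rw [← DirectSum.lof_eq_of ℂ, TensorProduct.directSumLeft_tmul_lof]
      by_cases hj : j' = j
      · subst hj
        rw [DirectSum.lof_apply, DirectSum.lof_apply]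
      · rw [DirectSum.lof_eq_of, DirectSum.of_eq_of_ne _ _ _ (Ne.symm hj),
          DirectSum.lof_eq_of, DirectSum.of_eq_of_ne _ _ _ (Ne.symm hj), TensorProduct.zero_tmul]
    | add z1 z2 h1 h2 =>
      rw [TensorProduct.add_tmul, map_add, DFinsupp.add_apply, h1, h2, DirectSum.add_apply,
        TensorProduct.add_tmul]
  have hDitmul : ∀ (w : W) (y : Y) (j : J), Di (w ⊗ₜ[ℂ] y) j = (bW w j) ⊗ₜ[ℂ] y := by
    intro w y j
    rw [hDidef]
    simp only [LinearEquiv.trans_apply, TensorProduct.congr_tmul, LinearEquiv.refl_apply]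
    exact hDS (bW w) y j
  have hDisymm : ∀ (j : J) (z : M j) (y : Y),
      Di.symm (DirectSum.lof ℂ J (fun j => M j ⊗[ℂ] Y) j (z ⊗ₜ[ℂ] y))
        = (bW.symm (DirectSum.lof ℂ J M j z)) ⊗ₜ[ℂ] y := by
    intro j z y
    rw [LinearEquiv.symm_apply_eq, hDidef]
    simp only [LinearEquiv.trans_apply, TensorProduct.congr_tmul, LinearEquiv.refl_apply,
      LinearEquiv.apply_symm_apply]
    rw [TensorProduct.directSumLeft_tmul_lof]
  -- the extracted component maps
  set G : ∀ (j : J), Fin (k j) → (X j0 →ₗ[ℂ] X j ⊗[ℂ] Y) := fun j t =>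
    (TensorProduct.map (LinearMap.proj t) LinearMap.id) ∘ₗ
      ((DirectSum.component ℂ J (fun j => M j ⊗[ℂ] Y) j) ∘ₗ
        ((Di : W ⊗[ℂ] Y →ₗ[ℂ] _) ∘ₗ F)) with hG
  have hGapp : ∀ (j : J) (t : Fin (k j)) (x : X j0),
      G j t x = TensorProduct.map (LinearMap.proj t) LinearMap.id (Di (F x) j) := by
    intro j t x; rfl
  -- equivariance of the component maps
  have hGequiv : ∀ (j : J) (t : Fin (k j)) (h : H) (x : X j0),
      G j t (τ j0 h x) = TensorProduct.map (τ j h) LinearMap.id (G j t x) := by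
    intro j t h x
    rw [hGapp, hGapp, hF]
    have hDieq : Di (TensorProduct.map (σ h) LinearMap.id (F x)) j
        = TensorProduct.map (LinearMap.compLeft (τ j h) (Fin (k j))) LinearMap.id
            (Di (F x) j) := by
      have key : ∀ z : W ⊗[ℂ] Y, Di (TensorProduct.map (σ h) LinearMap.id z) j
          = TensorProduct.map (LinearMap.compLeft (τ j h) (Fin (k j))) LinearMap.id
              (Di z j) := by
        intro z
        induction z using TensorProduct.induction_on with
        | zero => simp
        | tmul w y =>
          rw [TensorProduct.map_tmul, hDitmul, hDitmul, TensorProduct.map_tmul]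
          congr 1
          · funext t'
            rw [LinearMap.compLeft_apply]
            exact hbW h w j t'
        | add z1 z2 h1 h2 =>
          simp [map_add, DirectSum.add_apply, h1, h2]
      exact key (F x)
    have hcomp : ∀ z : M j ⊗[ℂ] Y,
        TensorProduct.map (LinearMap.proj t) LinearMap.id
          (TensorProduct.map (LinearMap.compLeft (τ j h) (Fin (k j))) LinearMap.id z)
        = TensorProduct.map (τ j h) LinearMap.id
            (TensorProduct.map (LinearMap.proj t) LinearMap.id z) := by
      intro z
      induction z using TensorProduct.induction_on with
      | zero => simp
      | tmul u y => simp [LinearMap.compLeft_apply]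
      | add z1 z2 h1 h2 => simp [map_add, h1, h2]
    rw [hDieq, hcomp]
  -- reconstruction within one component
  have hrecon : ∀ (j : J) (z : M j ⊗[ℂ] Y),
      z = ∑ t, TensorProduct.map (LinearMap.single ℂ (fun _ : Fin (k j) => X j) t)
        LinearMap.id (TensorProduct.map (LinearMap.proj t) LinearMap.id z) := by
    intro j z
    induction z using TensorProduct.induction_on with
    | zero => simp
    | tmul u y =>
      simp only [TensorProduct.map_tmul, LinearMap.proj_apply, LinearMap.id_coe, id_eq,
        LinearMap.coe_single]
      rw [← TensorProduct.sum_tmul]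
      congr 1
      exact (Finset.univ_sum_single u).symm
    | add z1 z2 h1 h2 =>
      conv_lhs => rw [h1, h2]
      rw [← Finset.sum_add_distrib]
      simp [map_add, TensorProduct.add_tmul]
  -- components away from `j0` vanish
  have hGzero : ∀ (j : J), j ≠ j0 → ∀ (t : Fin (k j)), G j t = 0 := by
    intro j hj t
    exact aux_hom_into_tensor_ne (τ j0) (τ j) (hXirr j0).1 (hXirr j0).2 (hXirr j).2
      (hXdist j0 j (Ne.symm hj)) (G j t) (hGequiv j t)
  -- the `j0`-components are of the form `x ↦ x ⊗ v t`
  have hvt : ∀ t : Fin (k j0), ∃ u : Y, ∀ x, G j0 t x = x ⊗ₜ[ℂ] u := fun t =>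
    (aux_hom_into_tensor_self (τ j0) (hXirr j0).1 (hXirr j0).2 (G j0 t) (hGequiv j0 t)).exists
  choose v hv using hvt
  have hcomp0 : ∀ (x : X j0) (j : J), j ≠ j0 → Di (F x) j = 0 := by
    intro x j hj
    rw [hrecon j (Di (F x) j)]
    refine Finset.sum_eq_zero fun t _ => ?_
    rw [← hGapp, hGzero j hj t]
    simp
  have hcompj0 : ∀ (x : X j0),
      Di (F x) j0 = ∑ t, (Pi.single t x : M j0) ⊗ₜ[ℂ] v t := by
    intro x
    rw [hrecon j0 (Di (F x) j0)]
    refine Finset.sum_congr rfl fun t _ => ?_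
    rw [← hGapp, hv]
    simp
  -- the main formula
  have hkey : ∀ x : X j0, F x
      = ∑ t, (bW.symm (DirectSum.lof ℂ J M j0 (Pi.single t x))) ⊗ₜ[ℂ] v t := by
    intro x
    have hdfx : Di (F x) = DirectSum.lof ℂ J (fun j => M j ⊗[ℂ] Y) j0
        (∑ t, (Pi.single t x : M j0) ⊗ₜ[ℂ] v t) := by
      refine DFinsupp.ext fun j => ?_
      by_cases hj : j = j0
      · subst hj
        rw [hcompj0, DirectSum.lof_apply]
      · rw [hcomp0 x j hj, DirectSum.lof_eq_of, DirectSum.of_eq_of_ne _ _ _ hj]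
    have := congrArg Di.symm hdfx
    rw [LinearEquiv.symm_apply_apply] at this
    rw [this, map_sum, map_sum]
    exact Finset.sum_congr rfl fun t _ => hDisymm j0 (Pi.single t x) (v t)
  refine ⟨v, hkey, ?_⟩
  -- uniqueness
  intro v' hv'
  funext s
  haveI := (hXirr j0).1
  obtain ⟨x0, hx0⟩ := exists_ne (0 : X j0)
  have hGv' : ∀ (u : Fin (k j0) → Y) (x : X j0),
      (hh : ∀ x, F x = ∑ t, (bW.symm (DirectSum.lof ℂ J M j0 (Pi.single t x))) ⊗ₜ[ℂ] u t) →
      G j0 s x = x ⊗ₜ[ℂ] u s := by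
    intro u x hh
    rw [hGapp, hh]
    have : Di (∑ t, (bW.symm (DirectSum.lof ℂ J M j0 (Pi.single t x))) ⊗ₜ[ℂ] u t) j0
        = ∑ t, (Pi.single t x : M j0) ⊗ₜ[ℂ] u t := by
      rw [map_sum, DFinsupp.finset_sum_apply]
      refine Finset.sum_congr rfl fun t _ => ?_
      rw [hDitmul, LinearEquiv.apply_symm_apply, DirectSum.lof_apply]
    rw [this, map_sum]
    rw [Finset.sum_eq_single s]
    · simp
    · intro t _ hts
      rw [TensorProduct.map_tmul]
      simp [Pi.single_eq_of_ne (Ne.symm hts)]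
    · intro habs
      exact absurd (Finset.mem_univ s) habs
  have h1 : x0 ⊗ₜ[ℂ] v' s = x0 ⊗ₜ[ℂ] v s := by
    rw [← hGv' v' x0 hv', hGv' v x0 hkey]
  have h0 : x0 ⊗ₜ[ℂ] (v' s - v s) = 0 := by
    rw [TensorProduct.tmul_sub, h1, sub_self]
  have := aux_tmul_right_eq_zero hx0 h0
  rwa [sub_eq_zero] at this

end branch

section cancel
variable {A : Type*} [Ring A]

/-- `Hom_A((Vl)^k, Vl) ≅ D^k` as left `D = End_A(Vl)`-modules. -/
private def auxE2 {Vl : Type*} [AddCommGroup Vl] [Module A Vl] (k : ℕ) :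
    ((Fin k → Vl) →ₗ[A] Vl) ≃ₗ[Module.End A Vl] (Fin k → Module.End A Vl) where
  toFun g := fun t => g ∘ₗ LinearMap.single A (fun _ : Fin k => Vl) t
  map_add' g g' := by funext t; rfl
  map_smul' d g := by funext t; rfl
  invFun d := ∑ t, (d t : Vl →ₗ[A] Vl) ∘ₗ LinearMap.proj t
  left_inv g := by
    refine LinearMap.ext fun v => ?_
    simp only [LinearMap.coe_sum, LinearMap.coe_comp, Function.comp_apply,
      Finset.sum_apply, LinearMap.proj_apply, LinearMap.coe_single]
    rw [← map_sum, Finset.univ_sum_single v]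
  right_inv d := by
    funext t
    ext v
    simp only [LinearMap.coe_comp, Function.comp_apply, LinearMap.coe_single,
      LinearMap.coe_sum, Finset.sum_apply, LinearMap.proj_apply]
    rw [Finset.sum_eq_single t]
    · simp
    · intro s _ hst
      rw [Pi.single_eq_of_ne hst]
      simp
    · intro h; exact absurd (Finset.mem_univ t) h

/-- Precomposition with an `A`-linear equivalence is a `D`-linear equivalence on Hom spaces. -/
private def auxE3 {M N Vl : Type*} [AddCommGroup M] [Module A M] [AddCommGroup N] [Module A N]
    [AddCommGroup Vl] [Module A Vl] (Θ : M ≃ₗ[A] N) :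
    (N →ₗ[A] Vl) ≃ₗ[Module.End A Vl] (M →ₗ[A] Vl) where
  toFun f := f ∘ₗ (Θ : M →ₗ[A] N)
  map_add' f g := by ext; rfl
  map_smul' d f := by ext; rfl
  invFun f := f ∘ₗ (Θ.symm : N →ₗ[A] M)
  left_inv f := by ext x; simp
  right_inv f := by ext x; simp

end cancel

section cancel2
variable {A : Type*} [Ring A]

private lemma aux_restrict {I : Type*} [DecidableEq I]
    (Vl : I → Type*) [∀ i, AddCommGroup (Vl i)] [∀ i, Module A (Vl i)]
    (k : I → ℕ) (i0 : I)
    (hzero : ∀ i, i ≠ i0 → ∀ g : Vl i →ₗ[A] Vl i0, g = 0) :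
    Nonempty (((⨁ i, (Fin (k i) → Vl i)) →ₗ[A] Vl i0) ≃ₗ[Module.End A (Vl i0)]
      ((Fin (k i0) → Vl i0) →ₗ[A] Vl i0)) := by
  refine ⟨{
    toFun := fun f => f ∘ₗ DirectSum.lof A I (fun i => Fin (k i) → Vl i) i0
    map_add' := fun f g => LinearMap.ext fun x => rfl
    map_smul' := fun d f => LinearMap.ext fun x => rfl
    invFun := fun g => g ∘ₗ DirectSum.component A I (fun i => Fin (k i) → Vl i) i0
    left_inv := ?_
    right_inv := ?_ }⟩
  · intro f
    refine DirectSum.linearMap_ext _ fun i => ?_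
    by_cases hi : i = i0
    · subst hi
      refine LinearMap.ext fun x => ?_
      simp only [LinearMap.coe_comp, Function.comp_apply]
      rw [DirectSum.component.lof_self]
    · have h1 : (f ∘ₗ DirectSum.lof A I (fun i => Fin (k i) → Vl i) i0) ∘ₗ
          ((DirectSum.component A I (fun i => Fin (k i) → Vl i) i0) ∘ₗ
            DirectSum.lof A I (fun i => Fin (k i) → Vl i) i) = 0 := by
        have hc : (DirectSum.component A I (fun i => Fin (k i) → Vl i) i0) ∘ₗ
            DirectSum.lof A I (fun i => Fin (k i) → Vl i) i = 0 := by
          refine LinearMap.ext fun x => ?_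
          simp only [LinearMap.coe_comp, Function.comp_apply, LinearMap.zero_apply]
          exact DirectSum.component.of _ _ _ _ |>.trans (by rw [dif_neg hi])
        rw [hc]
        simp
      have h2 : f ∘ₗ DirectSum.lof A I (fun i => Fin (k i) → Vl i) i = 0 := by
        refine LinearMap.pi_ext' fun t => ?_
        rw [hzero i hi ((f ∘ₗ DirectSum.lof A I (fun i => Fin (k i) → Vl i) i) ∘ₗ
          LinearMap.single A (fun _ : Fin (k i) => Vl i) t)]
        simp
      show ((f ∘ₗ DirectSum.lof A I (fun i => Fin (k i) → Vl i) i0) ∘ₗ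
          DirectSum.component A I (fun i => Fin (k i) → Vl i) i0) ∘ₗ
            DirectSum.lof A I (fun i => Fin (k i) → Vl i) i
          = f ∘ₗ DirectSum.lof A I (fun i => Fin (k i) → Vl i) i
      rw [LinearMap.comp_assoc, h1, h2]
  · intro g
    refine LinearMap.ext fun x => ?_
    simp only [LinearMap.coe_comp, Function.comp_apply]
    rw [DirectSum.component.lof_self]

private lemma aux_multiplicity_cancel {I : Type*} [DecidableEq I]
    (Vl : I → Type*) [∀ i, AddCommGroup (Vl i)] [∀ i, Module A (Vl i)]
    (hsimple : ∀ i, IsSimpleModule A (Vl i))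
    (hdist : ∀ i i', i ≠ i' → IsEmpty (Vl i ≃ₗ[A] Vl i'))
    (m' n' : I → ℕ)
    (Θ : (⨁ i, (Fin (m' i) → Vl i)) ≃ₗ[A] ⨁ i, (Fin (n' i) → Vl i))
    (i0 : I) : m' i0 = n' i0 := by
  classical
  haveI : ∀ i, IsSimpleModule A (Vl i) := hsimple
  have hzero : ∀ i, i ≠ i0 → ∀ g : Vl i →ₗ[A] Vl i0, g = 0 := by
    intro i hi g
    rcases g.bijective_or_eq_zero with hbij | h0
    · exact ((hdist i i0 hi).false (LinearEquiv.ofBijective g hbij)).elim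
    · exact h0
  obtain ⟨Em⟩ := aux_restrict Vl m' i0 hzero
  obtain ⟨En⟩ := aux_restrict Vl n' i0 hzero
  have Efin : (Fin (m' i0) → Module.End A (Vl i0)) ≃ₗ[Module.End A (Vl i0)]
      (Fin (n' i0) → Module.End A (Vl i0)) :=
    (((auxE2 (m' i0)).symm.trans Em.symm).trans
      ((auxE3 Θ.symm).trans (En.trans (auxE2 (n' i0)))))
  have h1 : Module.finrank (Module.End A (Vl i0)) (Fin (m' i0) → Module.End A (Vl i0))
      = m' i0 := Module.finrank_fin_fun _
  have h2 : Module.finrank (Module.End A (Vl i0)) (Fin (n' i0) → Module.End A (Vl i0))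
      = n' i0 := Module.finrank_fin_fun _
  rw [← h1, ← h2, Efin.finrank_eq]

end cancel2

set_option maxHeartbeats 1600000 in
/-- reciprocity.  Let `G` be a group, `H ≤ G` a subgroup, `A` a
ℂ-algebra, and `V` a complex vector space carrying a linear `G`-action `ρ` and an
`A`-module structure commuting with each other.  Suppose
`V ≅ ⊕_{i ∈ I} W i ⊗[ℂ] Vl i` as `ℂ[G] ⊗ A`-modules, where the `W i` are pairwise
non-isomorphic finite-dimensional irreducible `G`-representations and the `Vl i` are
pairwise non-isomorphic simple `A`-modules, and
`V ≅ ⊕_{j ∈ J} X j ⊗[ℂ] U j` as `ℂ[H] ⊗ A`-modules, where the `X j` are pairwise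
non-isomorphic finite-dimensional irreducible `H`-representations and the `U j` are
`A`-modules.  Suppose further that as `H`-representations `W i ≅ ⊕_j (X j)^{⊕ m i j}`
and as `A`-modules `U j ≅ ⊕_i (Vl i)^{⊕ n j i}`, with finite multiplicities `m i j`,
`n j i`.  Then `m i j = n j i` for all `i, j`.  (Each isomorphism is encoded as a
ℂ-linear equivalence together with the appropriate equivariance conditions, stated
componentwise on the direct sums; the action of `a ∈ A` on a summand is through its
second tensor factor, and the group actions through the first.) -/
theorem reciprocity_of_branching_multiplicities
    {G : Type*} [Group G] (H : Subgroup G)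
    {A : Type*} [Ring A] [Algebra ℂ A]
    {V : Type*} [AddCommGroup V] [Module ℂ V] [Module A V] [IsScalarTower ℂ A V]
    (ρ : Representation ℂ G V)
    (hcomm : ∀ (g : G) (a : A) (v : V), ρ g (a • v) = a • ρ g v)
    -- the `G × A`-decomposition `V ≅ ⊕ i, W i ⊗ Vl i`
    {I : Type*} [DecidableEq I]
    (W : I → Type*) [∀ i, AddCommGroup (W i)] [∀ i, Module ℂ (W i)]
    [∀ i, FiniteDimensional ℂ (W i)]
    (σ : ∀ i, Representation ℂ G (W i))
    (hWirr : ∀ i, Nontrivial (W i) ∧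
      ∀ p : Submodule ℂ (W i), (∀ g : G, ∀ w ∈ p, σ i g w ∈ p) → p = ⊥ ∨ p = ⊤)
    (hWdist : ∀ i i', i ≠ i' →
      ¬ ∃ e : W i ≃ₗ[ℂ] W i', ∀ (g : G) (w : W i), e (σ i g w) = σ i' g (e w))
    (Vl : I → Type*) [∀ i, AddCommGroup (Vl i)] [∀ i, Module ℂ (Vl i)]
    [∀ i, Module A (Vl i)] [∀ i, IsScalarTower ℂ A (Vl i)]
    [∀ i, SMulCommClass A ℂ (Vl i)]
    (hVlsimple : ∀ i, IsSimpleModule A (Vl i))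
    (hVldist : ∀ i i', i ≠ i' → IsEmpty (Vl i ≃ₗ[A] Vl i'))
    (e : V ≃ₗ[ℂ] ⨁ i, (W i ⊗[ℂ] Vl i))
    (heG : ∀ (g : G) (v : V) (i : I),
      e (ρ g v) i = TensorProduct.map (σ i g) LinearMap.id (e v i))
    (heA : ∀ (a : A) (v : V) (i : I),
      e (a • v) i
        = TensorProduct.map LinearMap.id (DistribMulAction.toLinearMap ℂ (Vl i) a) (e v i))
    -- the `H × A`-decomposition `V ≅ ⊕ j, X j ⊗ U j`
    {J : Type*} [DecidableEq J]
    (X : J → Type*) [∀ j, AddCommGroup (X j)] [∀ j, Module ℂ (X j)]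
    [∀ j, FiniteDimensional ℂ (X j)]
    (τ : ∀ j, Representation ℂ H (X j))
    (hXirr : ∀ j, Nontrivial (X j) ∧
      ∀ p : Submodule ℂ (X j), (∀ h : H, ∀ x ∈ p, τ j h x ∈ p) → p = ⊥ ∨ p = ⊤)
    (hXdist : ∀ j j', j ≠ j' →
      ¬ ∃ e' : X j ≃ₗ[ℂ] X j', ∀ (h : H) (x : X j), e' (τ j h x) = τ j' h (e' x))
    (U : J → Type*) [∀ j, AddCommGroup (U j)] [∀ j, Module ℂ (U j)]
    [∀ j, Module A (U j)] [∀ j, IsScalarTower ℂ A (U j)]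
    [∀ j, SMulCommClass A ℂ (U j)]
    (e' : V ≃ₗ[ℂ] ⨁ j, (X j ⊗[ℂ] U j))
    (he'H : ∀ (h : H) (v : V) (j : J),
      e' (ρ (h : G) v) j = TensorProduct.map (τ j h) LinearMap.id (e' v j))
    (he'A : ∀ (a : A) (v : V) (j : J),
      e' (a • v) j
        = TensorProduct.map LinearMap.id (DistribMulAction.toLinearMap ℂ (U j) a) (e' v j))
    -- branching of the `W i` over `H`:  `W i ≅ ⊕ j, (X j)^{⊕ m i j}`
    (m : I → J → ℕ)
    (bW : ∀ i, W i ≃ₗ[ℂ] ⨁ j, (Fin (m i j) → X j))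
    (hbW : ∀ (i : I) (h : H) (w : W i) (j : J) (t : Fin (m i j)),
      bW i (σ i (h : G) w) j t = τ j h (bW i w j t))
    -- decomposition of the `U j` into simple `A`-modules:  `U j ≅ ⊕ i, (Vl i)^{⊕ n j i}`
    (n : J → I → ℕ)
    (bU : ∀ j, U j ≃ₗ[ℂ] ⨁ i, (Fin (n j i) → Vl i))
    (hbU : ∀ (j : J) (a : A) (u : U j) (i : I) (t : Fin (n j i)),
      bU j (a • u) i t = a • bU j u i t) :
    ∀ (i : I) (j : J), m i j = n j i := by
  classical
  intro i0 j0
  haveI hnt0 : Nontrivial (X j0) := (hXirr j0).1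
  -- transport of the group and algebra actions through `e` and `e'`
  have hEg : ∀ (g : G) (i : I) (z : W i ⊗[ℂ] Vl i),
      ρ g (e.symm (DirectSum.lof ℂ I (fun i => W i ⊗[ℂ] Vl i) i z))
        = e.symm (DirectSum.lof ℂ I (fun i => W i ⊗[ℂ] Vl i) i
            (TensorProduct.map (σ i g) LinearMap.id z)) := by
    intro g i z
    rw [LinearEquiv.eq_symm_apply]
    refine DFinsupp.ext fun i' => ?_
    rw [heG, LinearEquiv.apply_symm_apply]
    by_cases hi : i = i'
    · subst hi
      rw [DirectSum.lof_apply, DirectSum.lof_apply]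
    · rw [DirectSum.lof_eq_of, DirectSum.of_eq_of_ne _ _ _ (Ne.symm hi), map_zero,
        DirectSum.lof_eq_of, DirectSum.of_eq_of_ne _ _ _ (Ne.symm hi)]
  have hEa : ∀ (a : A) (i : I) (z : W i ⊗[ℂ] Vl i),
      a • e.symm (DirectSum.lof ℂ I (fun i => W i ⊗[ℂ] Vl i) i z)
        = e.symm (DirectSum.lof ℂ I (fun i => W i ⊗[ℂ] Vl i) i
            (TensorProduct.map LinearMap.id (DistribMulAction.toLinearMap ℂ (Vl i) a) z)) := by
    intro a i z
    rw [LinearEquiv.eq_symm_apply]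
    refine DFinsupp.ext fun i' => ?_
    rw [heA, LinearEquiv.apply_symm_apply]
    by_cases hi : i = i'
    · subst hi
      rw [DirectSum.lof_apply, DirectSum.lof_apply]
    · rw [DirectSum.lof_eq_of, DirectSum.of_eq_of_ne _ _ _ (Ne.symm hi), map_zero,
        DirectSum.lof_eq_of, DirectSum.of_eq_of_ne _ _ _ (Ne.symm hi)]
  have hE'h : ∀ (h : H) (j : J) (z : X j ⊗[ℂ] U j),
      ρ (h : G) (e'.symm (DirectSum.lof ℂ J (fun j => X j ⊗[ℂ] U j) j z))
        = e'.symm (DirectSum.lof ℂ J (fun j => X j ⊗[ℂ] U j) j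
            (TensorProduct.map (τ j h) LinearMap.id z)) := by
    intro h j z
    rw [LinearEquiv.eq_symm_apply]
    refine DFinsupp.ext fun j' => ?_
    rw [he'H, LinearEquiv.apply_symm_apply]
    by_cases hj : j = j'
    · subst hj
      rw [DirectSum.lof_apply, DirectSum.lof_apply]
    · rw [DirectSum.lof_eq_of, DirectSum.of_eq_of_ne _ _ _ (Ne.symm hj), map_zero,
        DirectSum.lof_eq_of, DirectSum.of_eq_of_ne _ _ _ (Ne.symm hj)]
  have hE'a : ∀ (a : A) (j : J) (z : X j ⊗[ℂ] U j),
      a • e'.symm (DirectSum.lof ℂ J (fun j => X j ⊗[ℂ] U j) j z)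
        = e'.symm (DirectSum.lof ℂ J (fun j => X j ⊗[ℂ] U j) j
            (TensorProduct.map LinearMap.id (DistribMulAction.toLinearMap ℂ (U j) a) z)) := by
    intro a j z
    rw [LinearEquiv.eq_symm_apply]
    refine DFinsupp.ext fun j' => ?_
    rw [he'A, LinearEquiv.apply_symm_apply]
    by_cases hj : j = j'
    · subst hj
      rw [DirectSum.lof_apply, DirectSum.lof_apply]
    · rw [DirectSum.lof_eq_of, DirectSum.of_eq_of_ne _ _ _ (Ne.symm hj), map_zero,
        DirectSum.lof_eq_of, DirectSum.of_eq_of_ne _ _ _ (Ne.symm hj)]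
  -- the `A`-module of `H`-equivariant linear maps `X j0 → V`
  set Φ : Submodule A (X j0 →ₗ[ℂ] V) :=
    { carrier := {f | ∀ (h : H) (x : X j0), f (τ j0 h x) = ρ (h : G) (f x)}
      add_mem' := by
        intro f g hf hg h x
        simp only [LinearMap.add_apply, hf h x, hg h x, map_add]
      zero_mem' := by
        intro h x
        simp
      smul_mem' := by
        intro a f hf h x
        simp only [LinearMap.smul_apply, hf h x, hcomm] } with hΦdef
  have hΦmem : ∀ f : X j0 →ₗ[ℂ] V, f ∈ Φ ↔
      ∀ (h : H) (x : X j0), f (τ j0 h x) = ρ (h : G) (f x) := fun f => Iff.rfl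
  -- the map `β : U j0 → Φ`
  set βraw : U j0 → (X j0 →ₗ[ℂ] V) := fun u =>
    (e'.symm : (⨁ j, X j ⊗[ℂ] U j) →ₗ[ℂ] V) ∘ₗ
      (DirectSum.lof ℂ J (fun j => X j ⊗[ℂ] U j) j0) ∘ₗ
        ((TensorProduct.mk ℂ (X j0) (U j0)).flip u) with hβraw
  have hβapp : ∀ u x, βraw u x
      = e'.symm (DirectSum.lof ℂ J (fun j => X j ⊗[ℂ] U j) j0 (x ⊗ₜ[ℂ] u)) := fun u x => rfl
  have hβmem : ∀ u, βraw u ∈ Φ := by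
    intro u
    rw [hΦmem]
    intro h x
    rw [hβapp, hβapp, hE'h]
    simp
  set β : U j0 →ₗ[A] ↥Φ :=
    { toFun := fun u => ⟨βraw u, hβmem u⟩
      map_add' := by
        intro u u'
        apply Subtype.ext
        refine LinearMap.ext fun x => ?_
        simp only [Submodule.coe_add, LinearMap.add_apply, hβapp]
        rw [TensorProduct.tmul_add, map_add, map_add]
      map_smul' := by
        intro a u
        apply Subtype.ext
        refine LinearMap.ext fun x => ?_
        simp only [RingHom.id_apply, SetLike.val_smul, LinearMap.smul_apply, hβapp]
        rw [hE'a]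
        simp
        rfl } with hβdef
  have hβval : ∀ u, ((β u : ↥Φ) : X j0 →ₗ[ℂ] V) = βraw u := fun u => rfl
  -- β is injective
  have hker : ∀ u, β u = 0 → u = 0 := by
    intro u hu
    have hraw : βraw u = 0 := by
      have h := congrArg (fun z : ↥Φ => (z : X j0 →ₗ[ℂ] V)) hu
      simpa [hβval] using h
    obtain ⟨x0, hx0⟩ := exists_ne (0 : X j0)
    have h1 : e'.symm (DirectSum.lof ℂ J (fun j => X j ⊗[ℂ] U j) j0 (x0 ⊗ₜ[ℂ] u)) = 0 := by
      rw [← hβapp, hraw]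
      rfl
    have h2 : DirectSum.lof ℂ J (fun j => X j ⊗[ℂ] U j) j0 (x0 ⊗ₜ[ℂ] u) = 0 := by
      apply e'.symm.injective
      rw [h1, map_zero]
    have h3 : (x0 ⊗ₜ[ℂ] u : X j0 ⊗[ℂ] U j0) = 0 := by
      have := congrArg (fun z : ⨁ j, X j ⊗[ℂ] U j => z j0) h2
      simpa [DirectSum.lof_apply] using this
    exact aux_tmul_right_eq_zero hx0 h3
  have hβinj : Function.Injective β := by
    intro u1 u2 h12
    have hs : β (u1 - u2) = 0 := by rw [map_sub, h12, sub_self]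
    have := hker _ hs
    rwa [sub_eq_zero] at this
  -- β is surjective
  have hβsurj : Function.Surjective β := by
    rintro ⟨f, hf⟩
    rw [hΦmem] at hf
    set Fj : ∀ j, X j0 →ₗ[ℂ] X j ⊗[ℂ] U j := fun j =>
      (DirectSum.component ℂ J (fun j => X j ⊗[ℂ] U j) j) ∘ₗ
        ((e' : V →ₗ[ℂ] ⨁ j, X j ⊗[ℂ] U j) ∘ₗ f) with hFjdef
    have hFjapp : ∀ j x, Fj j x = e' (f x) j := fun j x => rfl
    have hFequiv : ∀ j (h : H) (x : X j0), Fj j (τ j0 h x)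
        = TensorProduct.map (τ j h) LinearMap.id (Fj j x) := by
      intro j h x
      rw [hFjapp, hFjapp, hf h x, he'H]
    have hFzero : ∀ j, j ≠ j0 → Fj j = 0 := by
      intro j hj
      exact aux_hom_into_tensor_ne (τ j0) (τ j) hnt0 (hXirr j0).2 (hXirr j).2
        (hXdist j0 j (Ne.symm hj)) (Fj j) (hFequiv j)
    obtain ⟨u, hu⟩ := (aux_hom_into_tensor_self (τ j0) hnt0 (hXirr j0).2 (Fj j0)
      (hFequiv j0)).exists
    refine ⟨u, ?_⟩
    apply Subtype.ext
    refine LinearMap.ext fun x => ?_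
    rw [hβval, hβapp]
    rw [LinearEquiv.symm_apply_eq]
    refine DFinsupp.ext fun j => ?_
    by_cases hj : j = j0
    · subst hj
      rw [DirectSum.lof_apply, ← hFjapp, hu]
    · rw [DirectSum.lof_eq_of, DirectSum.of_eq_of_ne _ _ _ hj, ← hFjapp,
        hFzero j hj]
      rfl
  -- the maps `γ_i : (Vl i)^{m i j0} → Φ`
  set wmap : ∀ i, Fin (m i j0) → (X j0 →ₗ[ℂ] W i) := fun i t =>
    ((bW i).symm : (⨁ j, (Fin (m i j) → X j)) →ₗ[ℂ] W i) ∘ₗ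
      (DirectSum.lof ℂ J (fun j => Fin (m i j) → X j) j0) ∘ₗ
        (LinearMap.single ℂ (fun _ : Fin (m i j0) => X j0) t) with hwmapdef
  have hwapp : ∀ i t x, wmap i t x
      = (bW i).symm (DirectSum.lof ℂ J (fun j => Fin (m i j) → X j) j0 (Pi.single t x)) :=
    fun i t x => rfl
  set Pmap : ∀ i, (Fin (m i j0) → Vl i) → (X j0 →ₗ[ℂ] W i ⊗[ℂ] Vl i) := fun i v =>
    ∑ t, ((TensorProduct.mk ℂ (W i) (Vl i)).flip (v t)) ∘ₗ wmap i t with hPmapdef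
  have hPapp : ∀ i v x, Pmap i v x = ∑ t, (wmap i t x) ⊗ₜ[ℂ] v t := by
    intro i v x
    rw [hPmapdef]
    simp [TensorProduct.mk_apply]
  -- characterization of equivariant maps into `W i ⊗ Vl i`
  have hbranch : ∀ i (F : X j0 →ₗ[ℂ] W i ⊗[ℂ] Vl i),
      (∀ (h : H) (x : X j0), F (τ j0 h x)
        = TensorProduct.map (σ i (h : G)) LinearMap.id (F x)) →
      ∃! v : Fin (m i j0) → Vl i, ∀ x, F x = Pmap i v x := by
    intro i F hF
    have := aux_branch X τ hXirr hXdist ((σ i).comp H.subtype) (fun j => m i j) (bW i)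
      (fun h w j t => hbW i h w j t) j0 F hF
    simp_rw [← hwapp, ← hPapp] at this
    exact this
  -- equivariance of the wmap's
  have hwequiv : ∀ i t (h : H) (x : X j0),
      wmap i t (τ j0 h x) = σ i (h : G) (wmap i t x) := by
    intro i t h x
    rw [hwapp, hwapp]
    apply (bW i).injective
    rw [LinearEquiv.apply_symm_apply]
    refine DFinsupp.ext fun j' => ?_
    funext t'
    rw [hbW i h _ j' t', LinearEquiv.apply_symm_apply]
    by_cases hj : j' = j0
    · subst hj
      rw [DirectSum.lof_apply, DirectSum.lof_apply]
      by_cases ht : t' = t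
      · subst ht
        simp
      · simp [Pi.single_eq_of_ne ht]
    · rw [DirectSum.lof_eq_of, DirectSum.of_eq_of_ne _ _ _ hj,
        DirectSum.lof_eq_of, DirectSum.of_eq_of_ne _ _ _ hj]
      simp
  -- the Pmap's are equivariant
  have hPequiv : ∀ i v (h : H) (x : X j0), Pmap i v (τ j0 h x)
      = TensorProduct.map (σ i (h : G)) LinearMap.id (Pmap i v x) := by
    intro i v h x
    rw [hPapp, hPapp, map_sum]
    refine Finset.sum_congr rfl fun t _ => ?_
    rw [TensorProduct.map_tmul, hwequiv]
    rfl
  -- additivity and `A`-linearity of `Pmap` in `v`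
  have hPadd : ∀ i v v' (x : X j0),
      Pmap i (v + v') x = Pmap i v x + Pmap i v' x := by
    intro i v v' x
    rw [hPapp, hPapp, hPapp, ← Finset.sum_add_distrib]
    refine Finset.sum_congr rfl fun t _ => ?_
    rw [Pi.add_apply, TensorProduct.tmul_add]
  have hPsmul : ∀ i (a : A) v (x : X j0), Pmap i (a • v) x
      = TensorProduct.map LinearMap.id (DistribMulAction.toLinearMap ℂ (Vl i) a)
          (Pmap i v x) := by
    intro i a v x
    rw [hPapp, hPapp, map_sum]
    refine Finset.sum_congr rfl fun t _ => ?_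
    rw [TensorProduct.map_tmul]
    rfl
  have hPzero : ∀ i (x : X j0), Pmap i 0 x = 0 := by
    intro i x
    rw [hPapp]
    simp
  -- the maps `γraw i v : X j0 →ₗ V`
  set γraw : ∀ i, (Fin (m i j0) → Vl i) → (X j0 →ₗ[ℂ] V) := fun i v =>
    (e.symm : (⨁ i, W i ⊗[ℂ] Vl i) →ₗ[ℂ] V) ∘ₗ
      (DirectSum.lof ℂ I (fun i => W i ⊗[ℂ] Vl i) i) ∘ₗ Pmap i v with hγrawdef
  have hγapp : ∀ i v x, γraw i v x
      = e.symm (DirectSum.lof ℂ I (fun i => W i ⊗[ℂ] Vl i) i (Pmap i v x)) :=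
    fun i v x => rfl
  have hγmem : ∀ i v, γraw i v ∈ Φ := by
    intro i v
    rw [hΦmem]
    intro h x
    rw [hγapp, hγapp, hPequiv, ← hEg]
  set γi : ∀ i, (Fin (m i j0) → Vl i) →ₗ[A] ↥Φ := fun i =>
    { toFun := fun v => ⟨γraw i v, hγmem i v⟩
      map_add' := by
        intro v v'
        apply Subtype.ext
        refine LinearMap.ext fun x => ?_
        simp only [Submodule.coe_add, LinearMap.add_apply, hγapp]
        rw [hPadd, map_add, map_add]
      map_smul' := by
        intro a v
        apply Subtype.ext
        refine LinearMap.ext fun x => ?_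
        simp only [RingHom.id_apply, SetLike.val_smul, LinearMap.smul_apply, hγapp]
        rw [hPsmul, ← hEa] } with hγidef
  set γ : (⨁ i, (Fin (m i j0) → Vl i)) →ₗ[A] ↥Φ :=
    DirectSum.toModule A I ↥Φ γi with hγdef
  -- component formula for γ
  have hγcomp : ∀ (z : ⨁ i, (Fin (m i j0) → Vl i)) (x : X j0) (i' : I),
      e (((γ z : ↥Φ) : X j0 →ₗ[ℂ] V) x) i' = Pmap i' (z i') x := by
    intro z
    induction z using DirectSum.induction_on with
    | zero =>
      intro x i'
      rw [map_zero]
      simp only [ZeroMemClass.coe_zero, LinearMap.zero_apply, map_zero, DFinsupp.zero_apply]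
      rw [hPzero]
    | of i y =>
      intro x i'
      rw [← DirectSum.lof_eq_of A, DirectSum.toModule_lof]
      show e (γraw i y x) i' = _
      rw [hγapp, LinearEquiv.apply_symm_apply]
      by_cases hi : i = i'
      · subst hi
        rw [DirectSum.lof_apply, DirectSum.lof_eq_of A, DirectSum.of_eq_same]
      · rw [DirectSum.lof_eq_of ℂ, DirectSum.of_eq_of_ne _ _ _ (Ne.symm hi),
          DirectSum.lof_eq_of A, DirectSum.of_eq_of_ne _ _ _ (Ne.symm hi), hPzero]
    | add z1 z2 h1 h2 =>
      intro x i'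
      rw [map_add]
      simp only [Submodule.coe_add, LinearMap.add_apply, map_add, DirectSum.add_apply]
      rw [h1, h2, hPadd]
  -- γ is injective
  have hγker : ∀ z, γ z = 0 → z = 0 := by
    intro z hz
    have hP0 : ∀ i (x : X j0), Pmap i (z i) x = 0 := by
      intro i x
      rw [← hγcomp, hz]
      simp
    refine DFinsupp.ext fun i => ?_
    have hb := hbranch i 0 (by intro h x; simp)
    have h1 : ∀ x : X j0, (0 : X j0 →ₗ[ℂ] W i ⊗[ℂ] Vl i) x = Pmap i (z i) x := by
      intro x
      rw [hP0]
      rfl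
    have h2 : ∀ x : X j0, (0 : X j0 →ₗ[ℂ] W i ⊗[ℂ] Vl i) x = Pmap i 0 x := by
      intro x
      rw [hPzero]
      rfl
    rw [hb.unique h1 h2]
    rfl
  have hγinj : Function.Injective γ := by
    intro z1 z2 h12
    have hs : γ (z1 - z2) = 0 := by rw [map_sub, h12, sub_self]
    have := hγker _ hs
    rwa [sub_eq_zero] at this
  -- γ is surjective
  have hγsurj : Function.Surjective γ := by
    rintro ⟨f, hf⟩
    rw [hΦmem] at hf
    set Fi : ∀ i, X j0 →ₗ[ℂ] W i ⊗[ℂ] Vl i := fun i =>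
      (DirectSum.component ℂ I (fun i => W i ⊗[ℂ] Vl i) i) ∘ₗ
        ((e : V →ₗ[ℂ] ⨁ i, W i ⊗[ℂ] Vl i) ∘ₗ f) with hFidef
    have hFiapp : ∀ i x, Fi i x = e (f x) i := fun i x => rfl
    have hFiequiv : ∀ i (h : H) (x : X j0), Fi i (τ j0 h x)
        = TensorProduct.map (σ i (h : G)) LinearMap.id (Fi i x) := by
      intro i h x
      rw [hFiapp, hFiapp, hf h x, heG]
    choose vfun hvfun using fun i => (hbranch i (Fi i) (hFiequiv i)).exists
    set bas := Module.finBasis ℂ (X j0) with hbas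
    set S : Finset I := Finset.univ.biUnion (fun s => (e (f (bas s))).support) with hS
    have hvanish : ∀ i, i ∉ S → vfun i = 0 := by
      intro i hi
      have hFi0 : Fi i = 0 := by
        apply bas.ext
        intro s
        rw [hFiapp]
        have : i ∉ (e (f (bas s))).support := by
          intro hmem
          exact hi (Finset.mem_biUnion.2 ⟨s, Finset.mem_univ s, hmem⟩)
        simpa using DFinsupp.notMem_support_iff.1 this
      have h1 : ∀ x : X j0, Fi i x = Pmap i (vfun i) x := hvfun i
      have h2 : ∀ x : X j0, Fi i x = Pmap i 0 x := by
        intro x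
        rw [hFi0, hPzero]
        rfl
      exact (hbranch i (Fi i) (hFiequiv i)).unique h1 h2
    set z : ⨁ i, (Fin (m i j0) → Vl i) :=
      DirectSum.mk (fun i => Fin (m i j0) → Vl i) S (fun i => vfun i.1) with hz
    have hzapp : ∀ i, z i = vfun i := by
      intro i
      by_cases hi : i ∈ S
      · rw [hz]
        exact DirectSum.mk_apply_of_mem hi
      · rw [hz, DirectSum.mk_apply_of_notMem hi, hvanish i hi]
    refine ⟨z, ?_⟩
    apply Subtype.ext
    refine LinearMap.ext fun x => ?_
    apply e.injective
    refine DFinsupp.ext fun i => ?_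
    rw [hγcomp, hzapp, ← hvfun i x, hFiapp]
  -- assemble the `A`-linear equivalence and conclude
  have bUA : U j0 ≃ₗ[A] ⨁ i, (Fin (n j0 i) → Vl i) :=
    { toFun := bU j0
      map_add' := (bU j0).map_add
      map_smul' := by
        intro a u
        refine DFinsupp.ext fun i => ?_
        funext t
        rw [RingHom.id_apply, hbU j0 a u i t, DFinsupp.smul_apply, Pi.smul_apply]
      invFun := (bU j0).symm
      left_inv := (bU j0).left_inv
      right_inv := (bU j0).right_inv }
  have Θ : (⨁ i, (Fin (m i j0) → Vl i)) ≃ₗ[A] ⨁ i, (Fin (n j0 i) → Vl i) :=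
    ((LinearEquiv.ofBijective γ ⟨hγinj, hγsurj⟩).trans
      (LinearEquiv.ofBijective β ⟨hβinj, hβsurj⟩).symm).trans bUA
  exact aux_multiplicity_cancel Vl hVlsimple hVldist (fun i => m i j0) (fun i => n j0 i) Θ i0
end
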